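/- arXiv:2303.00151 — 6 statements merged into one kernel-verified Lean document; each statement's English description precedes it below -/
import Mathlib

section
/- Let X be a real normed space, let f : ℝ × X → X satisfy |f(t,x)| ≤ μ and |f(t,x₁) − f(t,x₂)| ≤ γ|x₁ − x₂|, let 0 < q < 1, p > 0, and let ω : ℝ × X → X satisfy |ω(t,y₁) − ω(t,y₂)| ≤ p|y₁ − y₂|^q for all t, y₁, y₂. Then for all t, y₁, y₂: |f(t, y₁ + ω(t,y₁)) − f(t, y₂ + ω(t,y₂))| ≤ m(1+p)|y₁ − y₂|^q, where m = max{γ, 2μ^{1−q}γ^q}. -/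
/-!
Write `d = ‖y₁ - y₂‖`. The arguments of `f` are at distance at most `d + p d^q`. When `d ≤ 1`
we have `d ≤ d^q`, so the Lipschitz bound gives `γ (1 + p) d^q`. When `d > 1`, interpolating
between the Lipschitz bound and the trivial bound `2μ` makes `f` itself `q`-Hölder with
constant `2 μ^(1-q) γ^q`, and `(d + p d^q)^q ≤ ((1 + p) d)^q ≤ (1 + p) d^q`.
-/

open Real

lemma Real.min_le_rpow_mul_rpow {a b q : ℝ} (ha : 0 ≤ a) (hb : 0 ≤ b) (hq0 : 0 ≤ q)
    (hq1 : q ≤ 1) : min a b ≤ a ^ (1 - q) * b ^ q := by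
  have hmin : 0 ≤ min a b := le_min ha hb
  calc min a b = min a b ^ ((1 - q) + q) := by rw [sub_add_cancel, rpow_one]
    _ = min a b ^ (1 - q) * min a b ^ q := rpow_add' hmin (by norm_num)
    _ ≤ a ^ (1 - q) * b ^ q := by
      gcongr
      · exact min_le_left a b
      · exact min_le_right a b

lemma norm_sub_le_of_bounded_of_lipschitz {E F : Type*} [SeminormedAddCommGroup E]
    [SeminormedAddCommGroup F] {g : E → F} {μ γ q : ℝ} (hγ : 0 ≤ γ) (hq0 : 0 ≤ q)
    (hq1 : q ≤ 1) (hgb : ∀ x, ‖g x‖ ≤ μ) (hgl : ∀ x₁ x₂, ‖g x₁ - g x₂‖ ≤ γ * ‖x₁ - x₂‖)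
    (x₁ x₂ : E) : ‖g x₁ - g x₂‖ ≤ 2 * μ ^ (1 - q) * γ ^ q * ‖x₁ - x₂‖ ^ q := by
  have hμ : 0 ≤ μ := (norm_nonneg _).trans (hgb x₁)
  have hbound : ‖g x₁ - g x₂‖ ≤ 2 * μ :=
    (norm_sub_le _ _).trans (by linarith [hgb x₁, hgb x₂])
  have htwo : (2 : ℝ) ^ (1 - q) ≤ 2 := rpow_le_self_of_one_le one_le_two (by linarith)
  calc ‖g x₁ - g x₂‖ ≤ min (2 * μ) (γ * ‖x₁ - x₂‖) := le_min hbound (hgl x₁ x₂)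
    _ ≤ (2 * μ) ^ (1 - q) * (γ * ‖x₁ - x₂‖) ^ q :=
      min_le_rpow_mul_rpow (by positivity) (by positivity) hq0 hq1
    _ = 2 ^ (1 - q) * μ ^ (1 - q) * γ ^ q * ‖x₁ - x₂‖ ^ q := by
      rw [mul_rpow zero_le_two hμ, mul_rpow hγ (norm_nonneg _)]; ring
    _ ≤ 2 * μ ^ (1 - q) * γ ^ q * ‖x₁ - x₂‖ ^ q := by gcongr

lemma Real.add_mul_rpow_le_of_le_one {d p q : ℝ} (hd0 : 0 ≤ d) (hd1 : d ≤ 1) (hq1 : q ≤ 1) :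
    d + p * d ^ q ≤ (1 + p) * d ^ q := by
  linarith [self_le_rpow_of_le_one hd0 hd1 hq1]

lemma Real.rpow_add_mul_rpow_le_of_one_le {d p q : ℝ} (hd : 1 ≤ d) (hp : 0 ≤ p) (hq0 : 0 ≤ q)
    (hq1 : q ≤ 1) : (d + p * d ^ q) ^ q ≤ (1 + p) * d ^ q := by
  have hdq : d ^ q ≤ d := rpow_le_self_of_one_le hd hq1
  calc (d + p * d ^ q) ^ q ≤ ((1 + p) * d) ^ q := by
        gcongr
        linarith [mul_le_mul_of_nonneg_left hdq hp]
    _ = (1 + p) ^ q * d ^ q := mul_rpow (by linarith) (by linarith)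
    _ ≤ (1 + p) * d ^ q := by gcongr; exact rpow_le_self_of_one_le (by linarith) hq1

/-- **(Formula (3.34).)**  If `f : ℝ × X → X` is bounded by `μ` and Lipschitz with
constant `γ` in its second variable, `0 < q < 1`, `p > 0`, and `ω` is `q`-Hölder with
constant `p` in its second variable, then
`‖f(t, y₁ + ω(t,y₁)) − f(t, y₂ + ω(t,y₂))‖ ≤ m(1+p)‖y₁ − y₂‖^q`
with `m = max{γ, 2μ^{1−q}γ^q}`. -/
theorem holder_composition_bound {X : Type*} [NormedAddCommGroup X] [NormedSpace ℝ X]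
    (f ω : ℝ → X → X) (μ γ q p : ℝ) (hμ : 0 ≤ μ) (hγ : 0 ≤ γ)
    (hq0 : 0 < q) (hq1 : q < 1) (hp : 0 < p)
    (hfb : ∀ t x, ‖f t x‖ ≤ μ)
    (hflip : ∀ t x₁ x₂, ‖f t x₁ - f t x₂‖ ≤ γ * ‖x₁ - x₂‖)
    (hω : ∀ t y₁ y₂, ‖ω t y₁ - ω t y₂‖ ≤ p * ‖y₁ - y₂‖ ^ q) :
    ∀ t (y₁ y₂ : X), ‖f t (y₁ + ω t y₁) - f t (y₂ + ω t y₂)‖ ≤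
      max γ (2 * μ ^ (1 - q) * γ ^ q) * (1 + p) * ‖y₁ - y₂‖ ^ q := by
  intro t y₁ y₂
  set d := ‖y₁ - y₂‖
  have hs : ‖y₁ + ω t y₁ - (y₂ + ω t y₂)‖ ≤ d + p * d ^ q := by
    rw [add_sub_add_comm]
    exact (norm_add_le _ _).trans (add_le_add le_rfl (hω t y₁ y₂))
  have hp1 : 0 ≤ 1 + p := by linarith
  rcases le_or_gt d 1 with hd | hd
  · calc ‖f t (y₁ + ω t y₁) - f t (y₂ + ω t y₂)‖ ≤ γ * (d + p * d ^ q) :=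
          (hflip t _ _).trans (by gcongr)
      _ ≤ γ * ((1 + p) * d ^ q) := by
          gcongr; exact add_mul_rpow_le_of_le_one (norm_nonneg _) hd hq1.le
      _ ≤ max γ (2 * μ ^ (1 - q) * γ ^ q) * (1 + p) * d ^ q := by
          rw [← mul_assoc]; gcongr; exact le_max_left _ _
  · have hf := norm_sub_le_of_bounded_of_lipschitz hγ hq0.le hq1.le (hfb t) (hflip t)
      (y₁ + ω t y₁) (y₂ + ω t y₂)
    calc ‖f t (y₁ + ω t y₁) - f t (y₂ + ω t y₂)‖
        ≤ 2 * μ ^ (1 - q) * γ ^ q * (d + p * d ^ q) ^ q := hf.trans (by gcongr)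
      _ ≤ 2 * μ ^ (1 - q) * γ ^ q * ((1 + p) * d ^ q) := by
          gcongr; exact rpow_add_mul_rpow_le_of_one_le hd.le hp.le hq0.le hq1.le
      _ ≤ max γ (2 * μ ^ (1 - q) * γ ^ q) * (1 + p) * d ^ q := by
          rw [← mul_assoc]; gcongr; exact le_max_right _ _
end

section
/- Suppose the linear system y' = A(t)y admits an exponential trichotomy with fundamental matrix U, projections P, Q, constants β ≥ 1, α > 0, and Green function G, and suppose f : ℝ × ℝⁿ → ℝⁿ is continuous with |f(t,x)| ≤ μ, |f(t,x₁) − f(t,x₂)| ≤ γ|x₁ − x₂|, and 3βγα⁻¹ < 1. Then there exists a unique continuous map h : ℝ × ℝⁿ → ℝⁿ with sup_{(t,η)}|h(t,η)| ≤ 3βμα⁻¹ satisfying, for all t ∈ ℝ and η ∈ ℝⁿ, h(t,η) = ∫_{−∞}^{∞} G(t,s) f(s, U(s)U(t)⁻¹η + h(s, U(s)U(t)⁻¹η)) ds. -/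
open MeasureTheory Real Set

noncomputable section

/-- `ℝⁿ` with the Euclidean norm. -/
abbrev Euc (n : ℕ) : Type := EuclideanSpace ℝ (Fin n)

/-- Bounded linear operators on `ℝⁿ`, playing the role of `n × n` real matrices. -/
abbrev Op (n : ℕ) : Type := Euc n →L[ℝ] Euc n

/-- `U` is a fundamental matrix of the linear system `y' = A(t) y`, with pointwise
inverse `Uinv`. -/
def IsFundamental {n : ℕ} (A U Uinv : ℝ → Op n) : Prop :=
  (∀ t, HasDerivAt U ((A t).comp (U t)) t) ∧
  (∀ t, (U t).comp (Uinv t) = 1) ∧ (∀ t, (Uinv t).comp (U t) = 1)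

/-- The linear system with fundamental matrix `U` (with inverse `Uinv`) admits an
exponential trichotomy with projections `P`, `Q` and constants `β ≥ 1`, `α > 0`. -/
def ExpTrichotomy {n : ℕ} (U Uinv : ℝ → Op n) (P Q : Op n) (β α : ℝ) : Prop :=
  P.comp P = P ∧ Q.comp Q = Q ∧ P.comp Q = Q.comp P ∧
  P + Q - P.comp Q = 1 ∧ 1 ≤ β ∧ 0 < α ∧
  (∀ s t : ℝ, 0 ≤ s → s ≤ t →
    ‖(U t).comp (P.comp (Uinv s))‖ ≤ β * Real.exp (-α * (t - s))) ∧
  (∀ s t : ℝ, t ≤ s → 0 ≤ s →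
    ‖(U t).comp ((1 - P).comp (Uinv s))‖ ≤ β * Real.exp (-α * (s - t))) ∧
  (∀ s t : ℝ, t ≤ s → s ≤ 0 →
    ‖(U t).comp (Q.comp (Uinv s))‖ ≤ β * Real.exp (-α * (s - t))) ∧
  (∀ s t : ℝ, s ≤ t → s ≤ 0 →
    ‖(U t).comp ((1 - Q).comp (Uinv s))‖ ≤ β * Real.exp (-α * (t - s)))

/-- `y` is a solution of the linear system `y' = A(t) y`. -/
def IsLinSol {n : ℕ} (A : ℝ → Op n) (y : ℝ → Euc n) : Prop :=
  ∀ t, HasDerivAt y (A t (y t)) t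

/-- `x` is a solution of the nonlinear system `x' = A(t) x + f(t, x)`. -/
def IsNonlinSol {n : ℕ} (A : ℝ → Op n) (f : ℝ → Euc n → Euc n) (x : ℝ → Euc n) : Prop :=
  ∀ t, HasDerivAt x (A t (x t) + f t (x t)) t

/-- The pair `(H, L)` realizes a topological conjugacy between the nonlinear system
`x' = A(t)x + f(t,x)` and the linear system `y' = A(t)y`:  for each `t`, `H(t,·)` is a
homeomorphism of `ℝⁿ` with inverse `L(t,·)`; both differ boundedly from the identity;
`H` maps solutions of the nonlinear system to solutions of the linear system and `L`
maps solutions of the linear system to solutions of the nonlinear system. -/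
def ConjPair {n : ℕ} (A : ℝ → Op n) (f : ℝ → Euc n → Euc n)
    (H L : ℝ → Euc n → Euc n) : Prop :=
  (∀ t, Continuous (H t)) ∧ (∀ t, Continuous (L t)) ∧
  (∀ t x, L t (H t x) = x) ∧ (∀ t y, H t (L t y) = y) ∧
  (∃ C, ∀ t x, ‖H t x - x‖ ≤ C) ∧ (∃ C, ∀ t y, ‖L t y - y‖ ≤ C) ∧
  (∀ x : ℝ → Euc n, IsNonlinSol A f x → IsLinSol A (fun t => H t (x t))) ∧
  (∀ y : ℝ → Euc n, IsLinSol A y → IsNonlinSol A f (fun t => L t (y t)))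

/-- The Green function of an exponential trichotomy. -/
noncomputable def greenG {n : ℕ} (U Uinv : ℝ → Op n) (P Q : Op n) (t s : ℝ) : Op n :=
  if 0 ≤ s then
    (if s ≤ t then (U t).comp (P.comp (Uinv s))
     else -((U t).comp ((1 - P).comp (Uinv s))))
  else
    (if t ≤ s then -((U t).comp (Q.comp (Uinv s)))
     else (U t).comp ((1 - Q).comp (Uinv s)))

/-- The Green function `G̃` associated with the decomposition `P = P₁ + P₂ + P₃`,
`Q = P₂ + P₃ + P₄` (here `P₂₃ = P₂ + P₃`): its integral against a function realizes
`∫_{-∞}^t U(t)P₁U(s)⁻¹ · ds + ∫_0^t U(t)(P₂+P₃)U(s)⁻¹ · ds − ∫_t^∞ U(t)P₄U(s)⁻¹ · ds`. -/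
noncomputable def greenGt {n : ℕ} (U Uinv : ℝ → Op n) (P₁ P₂₃ P₄ : Op n)
    (t s : ℝ) : Op n :=
  (if s ≤ t then (U t).comp (P₁.comp (Uinv s)) else 0)
  + (if 0 ≤ s ∧ s ≤ t then (U t).comp (P₂₃.comp (Uinv s))
     else if t ≤ s ∧ s ≤ 0 then -((U t).comp (P₂₃.comp (Uinv s))) else 0)
  - (if t ≤ s then (U t).comp (P₄.comp (Uinv s)) else 0)

lemma my_int_abs {a : ℝ} (ha : 0 < a) :
    Integrable (fun u : ℝ => Real.exp (-a * |u|)) := by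
  have hIoi : IntegrableOn (fun u : ℝ => Real.exp (-a * |u|)) (Ioi 0) := by
    refine (exp_neg_integrableOn_Ioi 0 ha).congr_fun (fun x hx => ?_) measurableSet_Ioi
    rw [abs_of_pos hx]
  have hIic : IntegrableOn (fun u : ℝ => Real.exp (-a * |u|)) (Iic 0) := by
    have m : MeasurableEmbedding fun x : ℝ => -x :=
      (Homeomorph.neg ℝ).measurableEmbedding
    rw [← Measure.map_neg_eq_self (volume : Measure ℝ), m.integrableOn_map_iff]
    simp_rw [Function.comp_def, abs_neg, neg_preimage, neg_Iic, neg_zero]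
    exact (integrableOn_Ici_iff_integrableOn_Ioi).mpr hIoi
  rw [← integrableOn_univ, ← Iic_union_Ioi (a := (0:ℝ))]
  exact hIic.union hIoi

lemma my_int_abs_val {a : ℝ} (ha : 0 < a) :
    (∫ u : ℝ, Real.exp (-a * |u|)) = 2 * a⁻¹ := by
  rw [show (fun u : ℝ => Real.exp (-a * |u|)) = fun u : ℝ => (fun x => Real.exp (-a * x)) |u| from rfl,
    integral_comp_abs (f := fun x => Real.exp (-a * x))]
  have : ∫ x : ℝ in Ioi 0, Real.exp (-a * x) = ∫ x : ℝ in Ioi 0, (fun y => Real.exp (-y)) (a * x) := by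
    congr 1; ext x; rw [neg_mul]
  rw [this, integral_comp_mul_left_Ioi (fun y => Real.exp (-y)) 0 ha, mul_zero,
    integral_exp_neg_Ioi, neg_zero, Real.exp_zero, smul_eq_mul, mul_one]

lemma my_int_sub {a : ℝ} (ha : 0 < a) (t : ℝ) :
    Integrable (fun s : ℝ => Real.exp (-a * |t - s|)) := by
  have h := (my_int_abs ha).comp_sub_right t
  refine h.congr (Filter.Eventually.of_forall fun s => ?_)
  simp only []; rw [abs_sub_comm]

lemma my_int_sub_val {a : ℝ} (ha : 0 < a) (t : ℝ) :
    (∫ s : ℝ, Real.exp (-a * |t - s|)) = 2 * a⁻¹ := by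
  have h1 : (fun s : ℝ => Real.exp (-a * |t - s|)) =
      fun s : ℝ => (fun u : ℝ => Real.exp (-a * |u|)) (s - t) := by
    funext s; rw [abs_sub_comm]
  rw [h1, integral_sub_right_eq_self (fun u : ℝ => Real.exp (-a * |u|)) t, my_int_abs_val ha]

lemma green_norm_le {n : ℕ} {U Uinv : ℝ → Op n} {P Q : Op n} {β α : ℝ}
    (htri : ExpTrichotomy U Uinv P Q β α) (t s : ℝ) :
    ‖greenG U Uinv P Q t s‖ ≤ β * Real.exp (-α * |t - s|) := by
  obtain ⟨-, -, -, -, -, -, h1, h2, h3, h4⟩ := htri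
  unfold greenG
  split_ifs with hs hst hts
  · rw [abs_of_nonneg (by linarith)]; exact h1 s t hs hst
  · rw [abs_of_nonpos (by push_neg at hst; linarith), norm_neg, neg_sub]
    exact h2 s t (by push_neg at hst; linarith) hs
  · rw [abs_of_nonpos (by linarith), norm_neg, neg_sub]
    exact h3 s t hts (by push_neg at hs; linarith)
  · rw [abs_of_nonneg (by push_neg at hts; linarith)]
    exact h4 s t (by push_neg at hts; linarith) (by push_neg at hs; linarith)

lemma green_contAt {n : ℕ} {U Uinv : ℝ → Op n} (P Q : Op n)
    (hU : Continuous U) (hUinv : Continuous Uinv) {t₀ s : ℝ} (hs : s ≠ t₀) :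
    ContinuousAt (fun t => greenG U Uinv P Q t s) t₀ := by
  have hcomp : ∀ C : Op n, ContinuousAt (fun t => (U t).comp C) t₀ :=
    fun C => (hU.clm_comp continuous_const).continuousAt
  rcases lt_or_gt_of_ne hs with h | h
  · -- s < t₀ : eventually s ≤ t and ¬ t ≤ s
    have hev : ∀ᶠ t in nhds t₀, s < t := eventually_gt_nhds h
    by_cases hs0 : 0 ≤ s
    · refine ((hcomp (P.comp (Uinv s))).congr ?_)
      filter_upwards [hev] with t ht
      unfold greenG; rw [if_pos hs0, if_pos ht.le]
    · refine ((hcomp ((1 - Q).comp (Uinv s))).congr ?_)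
      filter_upwards [hev] with t ht
      unfold greenG; rw [if_neg hs0, if_neg (not_le.mpr ht)]
  · -- t₀ < s
    have hev : ∀ᶠ t in nhds t₀, t < s := eventually_lt_nhds h
    by_cases hs0 : 0 ≤ s
    · refine (((hcomp ((1 - P).comp (Uinv s))).neg).congr ?_)
      filter_upwards [hev] with t ht
      unfold greenG; rw [if_pos hs0, if_neg (not_le.mpr ht)]; rfl
    · refine (((hcomp (Q.comp (Uinv s))).neg).congr ?_)
      filter_upwards [hev] with t ht
      unfold greenG; rw [if_neg hs0, if_pos ht.le]; rfl

lemma green_apply {n : ℕ} (U Uinv : ℝ → Op n) (P Q : Op n) (t s : ℝ) (v : Euc n) :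
    greenG U Uinv P Q t s v =
      if 0 ≤ s then
        (if s ≤ t then (U t) (P ((Uinv s) v)) else -((U t) ((1 - P) ((Uinv s) v))))
      else
        (if t ≤ s then -((U t) (Q ((Uinv s) v))) else (U t) ((1 - Q) ((Uinv s) v))) := by
  unfold greenG
  split_ifs <;> simp

lemma green_meas {n : ℕ} {U Uinv : ℝ → Op n} (P Q : Op n)
    (hU : Continuous U) (hUinv : Continuous Uinv) (t : ℝ) {v : ℝ → Euc n}
    (hv : Continuous v) :
    AEStronglyMeasurable (fun s => greenG U Uinv P Q t s (v s)) volume := by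
  have happly : Continuous fun p : (Op n) × Euc n => p.1 p.2 :=
    isBoundedBilinearMap_apply.continuous
  have hc : ∀ C : Op n, Continuous fun s => (U t) (C ((Uinv s) (v s))) := by
    intro C
    have h1 : Continuous fun s => (Uinv s) (v s) := happly.comp (hUinv.prodMk hv)
    exact (U t).continuous.comp (C.continuous.comp h1)
  refine Measurable.aestronglyMeasurable ?_
  simp only [green_apply]
  exact Measurable.ite (measurableSet_le measurable_const measurable_id)
    (Measurable.ite (measurableSet_le measurable_id measurable_const)
      (hc P).measurable (hc (1 - P)).measurable.neg)
    (Measurable.ite (measurableSet_le measurable_const measurable_id)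
      (hc Q).measurable.neg (hc (1 - Q)).measurable)

lemma cont_U {n : ℕ} {A U Uinv : ℝ → Op n} (hfund : IsFundamental A U Uinv) :
    Continuous U :=
  continuous_iff_continuousAt.mpr fun t => (hfund.1 t).continuousAt

lemma cont_Uinv {n : ℕ} {A U Uinv : ℝ → Op n} (hfund : IsFundamental A U Uinv) :
    Continuous Uinv := by
  have hU : Continuous U := cont_U hfund
  have hkey : Uinv = fun t => Ring.inverse (U t) := by
    funext t
    exact (Ring.inverse_unit ⟨U t, Uinv t, hfund.2.1 t, hfund.2.2 t⟩).symm
  rw [continuous_iff_continuousAt]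
  intro t
  rw [hkey]
  have h1 : ContinuousAt Ring.inverse (U t) :=
    NormedRing.inverse_continuousAt ⟨U t, Uinv t, hfund.2.1 t, hfund.2.2 t⟩
  exact h1.comp hU.continuousAt

set_option maxHeartbeats 1000000 in
/-- **(Existence and uniqueness of the fixed point `h`, formula (3.5).)**
Under exponential trichotomy and the conditions `|f| ≤ μ`, `Lip(f) ≤ γ`, `3βγα⁻¹ < 1`,
there is a unique continuous map `h` with `‖h‖ ≤ 3βμα⁻¹` satisfying
`h(t,η) = ∫_{−∞}^{∞} G(t,s) f(s, U(s)U(t)⁻¹η + h(s, U(s)U(t)⁻¹η)) ds`. -/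
theorem fixed_point_h_exists_unique {n : ℕ} (A U Uinv : ℝ → Op n) (P Q : Op n)
    (β α μ γ : ℝ) (f : ℝ → Euc n → Euc n)
    (hA : Continuous A) (hfund : IsFundamental A U Uinv)
    (htri : ExpTrichotomy U Uinv P Q β α)
    (hfc : Continuous fun pr : ℝ × Euc n => f pr.1 pr.2)
    (hfb : ∀ t x, ‖f t x‖ ≤ μ)
    (hflip : ∀ t x₁ x₂, ‖f t x₁ - f t x₂‖ ≤ γ * ‖x₁ - x₂‖)
    (hsmall : 3 * β * γ * α⁻¹ < 1) :
    ∃ h : ℝ → Euc n → Euc n,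
      ((Continuous fun pr : ℝ × Euc n => h pr.1 pr.2) ∧
        (∀ t η, ‖h t η‖ ≤ 3 * β * μ * α⁻¹) ∧
        (∀ t (η : Euc n), h t η = ∫ s, (greenG U Uinv P Q t s)
          (f s (U s (Uinv t η) + h s (U s (Uinv t η)))))) ∧
      ∀ h' : ℝ → Euc n → Euc n,
        ((Continuous fun pr : ℝ × Euc n => h' pr.1 pr.2) ∧
          (∀ t η, ‖h' t η‖ ≤ 3 * β * μ * α⁻¹) ∧
          (∀ t (η : Euc n), h' t η = ∫ s, (greenG U Uinv P Q t s)
            (f s (U s (Uinv t η) + h' s (U s (Uinv t η)))))) → h' = h := by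
  have hβ1 : (1:ℝ) ≤ β := htri.2.2.2.2.1
  have hα : 0 < α := htri.2.2.2.2.2.1
  have hβ0 : (0:ℝ) < β := lt_of_lt_of_le one_pos hβ1
  have hμ0 : 0 ≤ μ := le_trans (norm_nonneg _) (hfb 0 0)
  have hU : Continuous U := cont_U hfund
  have hUinv : Continuous Uinv := cont_Uinv hfund
  set γ' := max γ 0 with hγ'def
  have hγ'0 : 0 ≤ γ' := le_max_right _ _
  have hflip' : ∀ t x₁ x₂, ‖f t x₁ - f t x₂‖ ≤ γ' * ‖x₁ - x₂‖ := fun t x₁ x₂ =>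
    le_trans (hflip t x₁ x₂) (mul_le_mul_of_nonneg_right (le_max_left _ _) (norm_nonneg _))
  have hsmall' : 3 * β * γ' * α⁻¹ < 1 := by
    rcases le_or_gt 0 γ with hg | hg
    · rwa [hγ'def, max_eq_left hg]
    · rw [hγ'def, max_eq_right hg.le]
      norm_num
  set M := 3 * β * μ * α⁻¹ with hM
  have hM0 : 0 ≤ M :=
    mul_nonneg (mul_nonneg (by linarith) hμ0) (inv_nonneg.mpr hα.le)
  have happly : Continuous fun p : (Op n) × Euc n => p.1 p.2 :=
    isBoundedBilinearMap_apply.continuous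
  set X := BoundedContinuousFunction (ℝ × Euc n) (Euc n) with hX
  let F : X → (ℝ × Euc n) → ℝ → Euc n := fun g p s =>
    greenG U Uinv P Q p.1 s
      (f s (U s (Uinv p.1 p.2) + g (s, U s (Uinv p.1 p.2))))
  -- joint continuity of the inner vector field
  have hW : Continuous fun q : (ℝ × Euc n) × ℝ => (U q.2) ((Uinv q.1.1) q.1.2) := by
    have h1 : Continuous fun q : (ℝ × Euc n) × ℝ => (Uinv q.1.1) q.1.2 :=
      happly.comp ((hUinv.comp (continuous_fst.comp continuous_fst)).prodMk
        (continuous_snd.comp continuous_fst))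
    exact happly.comp ((hU.comp continuous_snd).prodMk h1)
  have hvcont : ∀ g : X, Continuous fun q : (ℝ × Euc n) × ℝ =>
      f q.2 ((U q.2) ((Uinv q.1.1) q.1.2) + g (q.2, (U q.2) ((Uinv q.1.1) q.1.2))) := by
    intro g
    exact hfc.comp (continuous_snd.prodMk
      (hW.add (g.continuous.comp (continuous_snd.prodMk hW))))
  have hmeas : ∀ (g : X) p, AEStronglyMeasurable (F g p) volume := by
    intro g p
    exact green_meas P Q hU hUinv p.1
      ((hvcont g).comp (continuous_const.prodMk continuous_id))
  have hFb : ∀ (g : X) p s, ‖F g p s‖ ≤ β * μ * Real.exp (-α * |p.1 - s|) := by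
    intro g p s
    calc ‖F g p s‖ ≤ ‖greenG U Uinv P Q p.1 s‖ * ‖f s _‖ :=
          ContinuousLinearMap.le_opNorm _ _
      _ ≤ (β * Real.exp (-α * |p.1 - s|)) * μ :=
          mul_le_mul (green_norm_le htri _ _) (hfb _ _) (norm_nonneg _)
            (mul_nonneg hβ0.le (Real.exp_pos _).le)
      _ = β * μ * Real.exp (-α * |p.1 - s|) := by ring
  have hbint : ∀ t : ℝ, Integrable (fun s => β * μ * Real.exp (-α * |t - s|)) :=
    fun t => (my_int_sub hα t).const_mul (β * μ)
  have hFint : ∀ (g : X) p, Integrable (F g p) := fun g p =>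
    Integrable.mono' (hbint p.1) (hmeas g p) (Filter.Eventually.of_forall (hFb g p))
  have hTle : ∀ (g : X) p, ‖∫ s, F g p s‖ ≤ 2 * β * μ * α⁻¹ := by
    intro g p
    calc ‖∫ s, F g p s‖ ≤ ∫ s, β * μ * Real.exp (-α * |p.1 - s|) :=
          norm_integral_le_of_norm_le (hbint p.1) (Filter.Eventually.of_forall (hFb g p))
      _ = (β * μ) * ∫ s, Real.exp (-α * |p.1 - s|) := by
          rw [← integral_const_mul]
      _ = (β * μ) * (2 * α⁻¹) := by rw [my_int_sub_val hα]
      _ = 2 * β * μ * α⁻¹ := by ring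
  have hTleM : ∀ (g : X) p, ‖∫ s, F g p s‖ ≤ M := by
    intro g p
    refine le_trans (hTle g p) ?_
    rw [hM]
    nlinarith [mul_nonneg (mul_nonneg hβ0.le hμ0) (inv_nonneg.mpr hα.le)]
  have hTcont : ∀ g : X, Continuous fun p : ℝ × Euc n => ∫ s, F g p s := by
    intro g
    rw [continuous_iff_continuousAt]
    intro p₀
    refine continuousAt_of_dominated (Filter.Eventually.of_forall (hmeas g))
      ?_ ((my_int_sub hα p₀.1).const_mul (β * μ * Real.exp α)) ?_
    · have hev : ∀ᶠ p : ℝ × Euc n in nhds p₀, |p.1 - p₀.1| ≤ 1 := by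
        have h1 : Metric.closedBall p₀.1 1 ∈ nhds p₀.1 := Metric.closedBall_mem_nhds _ one_pos
        have h2 := continuous_fst.continuousAt (x := p₀) h1
        refine Filter.mem_of_superset h2 ?_
        intro p hp
        simpa [Real.dist_eq] using hp
      filter_upwards [hev] with p hp
      refine Filter.Eventually.of_forall fun s => ?_
      refine le_trans (hFb g p s) ?_
      have habs : |p₀.1 - s| ≤ |p₀.1 - p.1| + |p.1 - s| := abs_sub_le _ _ _
      have h3 : |p₀.1 - p.1| ≤ 1 := by rwa [abs_sub_comm]
      have h4 : -α * |p.1 - s| ≤ α + -α * |p₀.1 - s| := by nlinarith [hα.le]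
      calc β * μ * Real.exp (-α * |p.1 - s|)
          ≤ β * μ * (Real.exp α * Real.exp (-α * |p₀.1 - s|)) := by
            refine mul_le_mul_of_nonneg_left ?_ (mul_nonneg hβ0.le hμ0)
            rw [← Real.exp_add]
            exact Real.exp_le_exp.mpr h4
        _ = β * μ * Real.exp α * Real.exp (-α * |p₀.1 - s|) := by ring
    · have hae : ∀ᵐ s : ℝ, s ≠ p₀.1 := by
        rw [ae_iff]
        simp only [not_ne_iff, setOf_eq_eq_singleton]
        exact measure_singleton _
      filter_upwards [hae] with s hsne
      have hg : ContinuousAt (fun p : ℝ × Euc n => greenG U Uinv P Q p.1 s) p₀ :=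
        (green_contAt P Q hU hUinv hsne).comp continuousAt_fst
      have hv : ContinuousAt (fun p : ℝ × Euc n =>
          f s ((U s) ((Uinv p.1) p.2) + g (s, (U s) ((Uinv p.1) p.2)))) p₀ :=
        ((hvcont g).comp (continuous_id.prodMk continuous_const)).continuousAt
      exact happly.continuousAt.comp (hg.prodMk hv)
  -- contraction estimate
  have hdist : ∀ (g₁ g₂ : X) p, ‖(∫ s, F g₁ p s) - ∫ s, F g₂ p s‖ ≤
      2 * β * γ' * α⁻¹ * dist g₁ g₂ := by
    intro g₁ g₂ p
    rw [← integral_sub (hFint g₁ p) (hFint g₂ p)]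
    have hptw : ∀ s, ‖F g₁ p s - F g₂ p s‖ ≤
        (β * γ' * dist g₁ g₂) * Real.exp (-α * |p.1 - s|) := by
      intro s
      have hmap : F g₁ p s - F g₂ p s = greenG U Uinv P Q p.1 s
          (f s (U s (Uinv p.1 p.2) + g₁ (s, U s (Uinv p.1 p.2)))
            - f s (U s (Uinv p.1 p.2) + g₂ (s, U s (Uinv p.1 p.2)))) := by
        rw [map_sub]
      rw [hmap]
      calc ‖greenG U Uinv P Q p.1 s _‖ ≤ ‖greenG U Uinv P Q p.1 s‖ * ‖_ - _‖ :=
            ContinuousLinearMap.le_opNorm _ _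
        _ ≤ (β * Real.exp (-α * |p.1 - s|)) * (γ' * dist g₁ g₂) := by
            refine mul_le_mul (green_norm_le htri _ _) ?_ (norm_nonneg _)
              (mul_nonneg hβ0.le (Real.exp_pos _).le)
            refine le_trans (hflip' _ _ _) ?_
            refine mul_le_mul_of_nonneg_left ?_ hγ'0
            rw [add_sub_add_left_eq_sub, ← dist_eq_norm]
            exact BoundedContinuousFunction.dist_coe_le_dist _
        _ = (β * γ' * dist g₁ g₂) * Real.exp (-α * |p.1 - s|) := by ring
    calc ‖∫ s, (F g₁ p s - F g₂ p s)‖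
        ≤ ∫ s, (β * γ' * dist g₁ g₂) * Real.exp (-α * |p.1 - s|) :=
          norm_integral_le_of_norm_le ((my_int_sub hα p.1).const_mul _)
            (Filter.Eventually.of_forall hptw)
      _ = (β * γ' * dist g₁ g₂) * (2 * α⁻¹) := by
          rw [integral_const_mul, my_int_sub_val hα]
      _ ≤ 2 * β * γ' * α⁻¹ * dist g₁ g₂ := le_of_eq (by ring)
  -- set up the complete space and the contraction
  have hk0 : 0 ≤ 3 * β * γ' * α⁻¹ :=
    mul_nonneg (mul_nonneg (by linarith) hγ'0) (inv_nonneg.mpr hα.le)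
  set k : NNReal := ⟨3 * β * γ' * α⁻¹, hk0⟩ with hk
  have hdistk : ∀ (g₁ g₂ : X) p, ‖(∫ s, F g₁ p s) - ∫ s, F g₂ p s‖ ≤
      (k : ℝ) * dist g₁ g₂ := by
    intro g₁ g₂ p
    refine le_trans (hdist g₁ g₂ p) ?_
    have : (k : ℝ) = 3 * β * γ' * α⁻¹ := rfl
    rw [this]
    nlinarith [dist_nonneg (x := g₁) (y := g₂),
      mul_nonneg (mul_nonneg hβ0.le hγ'0) (inv_nonneg.mpr hα.le)]
  set Sset : Set X := {g : X | ‖g‖ ≤ M} with hSset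
  haveI : Nonempty Sset := ⟨⟨0, by simpa [hSset] using hM0⟩⟩
  haveI : CompleteSpace Sset :=
    IsClosed.completeSpace_coe (hs := isClosed_le continuous_norm continuous_const)
  let T : Sset → Sset := fun g =>
    ⟨BoundedContinuousFunction.ofNormedAddCommGroup (fun p => ∫ s, F g.1 p s)
        (hTcont g.1) M (hTleM g.1),
      BoundedContinuousFunction.norm_ofNormedAddCommGroup_le _ hM0 _⟩
  have hlip : LipschitzWith k T := by
    refine LipschitzWith.of_dist_le_mul fun g₁ g₂ => ?_
    rw [Subtype.dist_eq]
    refine (BoundedContinuousFunction.dist_le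
      (mul_nonneg k.2 dist_nonneg)).mpr fun p => ?_
    rw [dist_eq_norm]
    refine le_trans (hdistk g₁.1 g₂.1 p) ?_
    rw [Subtype.dist_eq]
    exact le_rfl
  have hcontr : ContractingWith k T := by
    constructor
    · exact_mod_cast hsmall'
    · exact hlip
  set g₀ : Sset := hcontr.fixedPoint T with hg₀  -- check API order
  have hfix : T g₀ = g₀ := hcontr.fixedPoint_isFixedPt
  refine ⟨fun t η => (g₀ : X) (t, η), ⟨?_, ?_, ?_⟩, ?_⟩
  · exact (g₀ : X).continuous.comp (continuous_fst.prodMk continuous_snd)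
  · exact fun t η => le_trans ((g₀ : X).norm_coe_le_norm (t, η)) g₀.2
  · intro t η
    have := congrArg (fun x : Sset => (x : X) (t, η)) hfix
    exact this.symm
  · rintro h' ⟨hc', hb', he'⟩
    have hb'' : ∀ p : ℝ × Euc n, ‖h' p.1 p.2‖ ≤ M := fun p => hb' p.1 p.2
    have hg'el : ‖BoundedContinuousFunction.ofNormedAddCommGroup
        (fun p : ℝ × Euc n => h' p.1 p.2) hc' M hb''‖ ≤ M :=
      BoundedContinuousFunction.norm_ofNormedAddCommGroup_le _ hM0 _
    have hfix' : T ⟨_, hg'el⟩ = ⟨_, hg'el⟩ := by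
      apply Subtype.ext
      apply BoundedContinuousFunction.ext
      intro p
      exact (he' p.1 p.2).symm
    have huniq := hcontr.fixedPoint_unique hfix'
    funext t η
    have h5 := congrArg (fun x : Sset => (x : X) (t, η)) huniq
    exact h5
end
end

section
/- Suppose the linear system y' = A(t)y admits an exponential trichotomy with fundamental matrix U, projections P, Q, constants β ≥ 1, α > 0, and Green function G, and let f : ℝ × ℝⁿ → ℝⁿ be continuous and bounded. Let y : ℝ → ℝⁿ be a solution of y' = A(t)y, and let g : ℝ → ℝⁿ be a bounded continuous function satisfying g(t) = y(t) + ∫_{−∞}^{∞} G(t,s) f(s, g(s)) ds for all t ∈ ℝ. Then g is differentiable and g'(t) = A(t)g(t) + f(t, g(t)) for all t, i.e. g is a solution of the nonlinear system. -/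
open MeasureTheory Real

noncomputable section

lemma integrable_exp_neg_abs' {a : ℝ} (ha : 0 < a) :
    Integrable fun s : ℝ => Real.exp (-a * |s|) := by
  have hIoi : IntegrableOn (fun s : ℝ => Real.exp (-a * |s|)) (Set.Ioi 0) :=
    (exp_neg_integrableOn_Ioi 0 ha).congr_fun
      (fun s hs => by rw [abs_of_pos hs]) measurableSet_Ioi
  have hIio : IntegrableOn (fun s : ℝ => Real.exp (-a * |s|)) (Set.Iio 0) := by
    rw [← (Measure.measurePreserving_neg (volume : Measure ℝ)).integrableOn_comp_preimage
        (Homeomorph.neg ℝ).measurableEmbedding]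
    simpa [Function.comp_def] using hIoi
  rw [← integrableOn_univ, ← Set.Iio_union_Ici (a := (0:ℝ)), integrableOn_union,
    integrableOn_Ici_iff_integrableOn_Ioi]
  exact ⟨hIio, hIoi⟩

set_option maxHeartbeats 1000000 in
/-- **(Formula (3.8): `H` maps linear solutions to nonlinear solutions.)**
If `y` solves the linear system and the bounded continuous function `g` satisfies
`g(t) = y(t) + ∫_{−∞}^{∞} G(t,s) f(s, g(s)) ds`, then `g` is differentiable and
solves the nonlinear system `g' = A(t)g + f(t,g)`. -/
theorem green_integral_solves_nonlinear {n : ℕ} (A U Uinv : ℝ → Op n) (P Q : Op n)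
    (β α μ : ℝ) (f : ℝ → Euc n → Euc n) (y g : ℝ → Euc n)
    (hA : Continuous A) (hfund : IsFundamental A U Uinv)
    (htri : ExpTrichotomy U Uinv P Q β α)
    (hfc : Continuous fun pr : ℝ × Euc n => f pr.1 pr.2)
    (hfb : ∀ t x, ‖f t x‖ ≤ μ)
    (hy : IsLinSol A y)
    (hgc : Continuous g) (hgb : ∃ C, ∀ t, ‖g t‖ ≤ C)
    (heq : ∀ t, g t = y t + ∫ s, (greenG U Uinv P Q t s) (f s (g s))) :
    ∀ t, HasDerivAt g (A t (g t) + f t (g t)) t := by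
  obtain ⟨hU, hUr, hUl⟩ := hfund
  obtain ⟨-, -, -, -, hβ, hα, hb1, hb2, hb3, hb4⟩ := htri
  classical
  have hμ0 : 0 ≤ μ := le_trans (norm_nonneg _) (hfb 0 0)
  set h : ℝ → Euc n := fun s => f s (g s) with hhdef
  have heq' : ∀ t, g t = y t + ∫ s, (greenG U Uinv P Q t s) (h s) := heq
  have hhc : Continuous h := hfc.comp (continuous_id.prodMk hgc)
  have hhb : ∀ s, ‖h s‖ ≤ μ := fun s => hfb s (g s)
  have hUc : Continuous U := by
    rw [continuous_iff_continuousAt]; exact fun t => (hU t).continuousAt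
  have hUinvc : Continuous Uinv := by
    have heq2 : Uinv = fun t => Ring.inverse (U t) := by
      funext t
      exact (Ring.inverse_unit ⟨U t, Uinv t, hUr t, hUl t⟩).symm
    rw [heq2, continuous_iff_continuousAt]
    intro t
    exact ContinuousAt.comp (x := t) (f := U)
      (NormedRing.inverse_continuousAt (⟨U t, Uinv t, hUr t, hUl t⟩ : _ˣ)) hUc.continuousAt
  have hUlapp : ∀ t x, (Uinv t) ((U t) x) = x := fun t x => by
    have := congrArg (fun L : Op n => L x) (hUl t); simpa using this
  have hUrapp : ∀ t x, (U t) ((Uinv t) x) = x := fun t x => by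
    have := congrArg (fun L : Op n => L x) (hUr t); simpa using this
  set w : ℝ → Euc n := fun s => (Uinv s) (h s) with hwdef
  have hwc : Continuous w := hUinvc.clm_apply hhc
  have hXw : ∀ (X : Op n) (a b : ℝ), IntegrableOn (fun s => X (w s)) (Set.Icc a b) :=
    fun X a b => (X.continuous.comp hwc).integrableOn_Icc
  -- measurability of the Green integrand
  have hFmeas : ∀ t, AEStronglyMeasurable (fun s => (greenG U Uinv P Q t s) (h s)) volume := by
    intro t
    have hre : (fun s => (greenG U Uinv P Q t s) (h s)) = fun s =>
        (Set.Ici (0:ℝ) ∩ Set.Iic t).indicator (fun s => (U t) (P (w s))) s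
        + (Set.Ici (0:ℝ) ∩ Set.Ioi t).indicator
            (fun s => -((U t) (((1:Op n) - P) (w s)))) s
        + (Set.Iio (0:ℝ) ∩ Set.Ici t).indicator (fun s => -((U t) (Q (w s)))) s
        + (Set.Iio (0:ℝ) ∩ Set.Iio t).indicator
            (fun s => (U t) (((1:Op n) - Q) (w s))) s := by
      funext s
      simp only [Set.indicator_apply, Set.mem_inter_iff, Set.mem_Ici, Set.mem_Iic,
        Set.mem_Ioi, Set.mem_Iio, greenG]
      rcases le_or_gt 0 s with h0 | h0
      · rcases le_or_gt s t with h1 | h1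
        · rw [if_pos h0, if_pos h1, if_pos ⟨h0, h1⟩,
            if_neg (fun hc : 0 ≤ s ∧ t < s => absurd hc.2 (not_lt.2 h1)),
            if_neg (fun hc : s < 0 ∧ t ≤ s => absurd hc.1 (not_lt.2 h0)),
            if_neg (fun hc : s < 0 ∧ s < t => absurd hc.1 (not_lt.2 h0))]
          simp [ContinuousLinearMap.comp_apply, hwdef]
        · rw [if_pos h0, if_neg (not_le.2 h1),
            if_neg (fun hc : 0 ≤ s ∧ s ≤ t => absurd hc.2 (not_le.2 h1)),
            if_pos ⟨h0, h1⟩,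
            if_neg (fun hc : s < 0 ∧ t ≤ s => absurd hc.1 (not_lt.2 h0)),
            if_neg (fun hc : s < 0 ∧ s < t => absurd hc.1 (not_lt.2 h0))]
          simp [ContinuousLinearMap.comp_apply, hwdef]
      · rcases le_or_gt t s with h1 | h1
        · rw [if_neg (not_le.2 h0), if_pos h1,
            if_neg (fun hc : 0 ≤ s ∧ s ≤ t => absurd hc.1 (not_le.2 h0)),
            if_neg (fun hc : 0 ≤ s ∧ t < s => absurd hc.1 (not_le.2 h0)),
            if_pos ⟨h0, h1⟩,
            if_neg (fun hc : s < 0 ∧ s < t => absurd hc.2 (not_lt.2 h1))]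
          simp [ContinuousLinearMap.comp_apply, hwdef]
        · rw [if_neg (not_le.2 h0), if_neg (not_le.2 h1),
            if_neg (fun hc : 0 ≤ s ∧ s ≤ t => absurd hc.1 (not_le.2 h0)),
            if_neg (fun hc : 0 ≤ s ∧ t < s => absurd hc.1 (not_le.2 h0)),
            if_neg (fun hc : s < 0 ∧ t ≤ s => absurd hc.2 (not_le.2 h1)),
            if_pos ⟨h0, h1⟩]
          simp [ContinuousLinearMap.comp_apply, hwdef]
    rw [hre]
    refine StronglyMeasurable.aestronglyMeasurable ?_
    have m1 : StronglyMeasurable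
        ((Set.Ici (0:ℝ) ∩ Set.Iic t).indicator fun s => (U t) (P (w s))) :=
      ((U t).continuous.comp (P.continuous.comp hwc)).stronglyMeasurable.indicator
        (measurableSet_Ici.inter measurableSet_Iic)
    have m2 : StronglyMeasurable
        ((Set.Ici (0:ℝ) ∩ Set.Ioi t).indicator fun s => -((U t) (((1:Op n) - P) (w s)))) :=
      ((U t).continuous.comp
        (((1:Op n) - P).continuous.comp hwc)).neg.stronglyMeasurable.indicator
        (measurableSet_Ici.inter measurableSet_Ioi)
    have m3 : StronglyMeasurable
        ((Set.Iio (0:ℝ) ∩ Set.Ici t).indicator fun s => -((U t) (Q (w s)))) :=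
      ((U t).continuous.comp (Q.continuous.comp hwc)).neg.stronglyMeasurable.indicator
        (measurableSet_Iio.inter measurableSet_Ici)
    have m4 : StronglyMeasurable
        ((Set.Iio (0:ℝ) ∩ Set.Iio t).indicator fun s => (U t) (((1:Op n) - Q) (w s))) :=
      ((U t).continuous.comp
        (((1:Op n) - Q).continuous.comp hwc)).stronglyMeasurable.indicator
        (measurableSet_Iio.inter measurableSet_Iio)
    exact ((m1.add m2).add m3).add m4
  -- bound
  have hFbd : ∀ t s, ‖(greenG U Uinv P Q t s) (h s)‖ ≤ β * μ * Real.exp (-α * |s - t|) := by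
    intro t s
    have hle : ∀ L : Op n, ‖L‖ ≤ β * Real.exp (-α * |s - t|) →
        ‖L (h s)‖ ≤ β * μ * Real.exp (-α * |s - t|) := by
      intro L hL
      calc ‖L (h s)‖ ≤ ‖L‖ * ‖h s‖ := L.le_opNorm _
        _ ≤ (β * Real.exp (-α * |s - t|)) * μ :=
          mul_le_mul hL (hhb s) (norm_nonneg _) (by positivity)
        _ = β * μ * Real.exp (-α * |s - t|) := by ring
    rcases le_or_gt 0 s with h0 | h0
    · rcases le_or_gt s t with h1 | h1
      · rw [greenG, if_pos h0, if_pos h1]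
        refine hle _ ?_
        rw [abs_sub_comm, abs_of_nonneg (sub_nonneg.2 h1)]
        exact hb1 s t h0 h1
      · rw [greenG, if_pos h0, if_neg (not_le.2 h1)]
        refine hle _ ?_
        rw [norm_neg, abs_of_nonneg (sub_nonneg.2 h1.le)]
        exact hb2 s t h1.le h0
    · rcases le_or_gt t s with h1 | h1
      · rw [greenG, if_neg (not_le.2 h0), if_pos h1]
        refine hle _ ?_
        rw [norm_neg, abs_of_nonneg (sub_nonneg.2 h1)]
        exact hb3 s t h1 h0.le
      · rw [greenG, if_neg (not_le.2 h0), if_neg (not_le.2 h1)]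
        refine hle _ ?_
        rw [abs_sub_comm, abs_of_nonneg (sub_nonneg.2 h1.le)]
        exact hb4 s t h1.le h0.le
  have hFint : ∀ t, Integrable (fun s => (greenG U Uinv P Q t s) (h s)) := by
    intro t
    refine Integrable.mono' ?_ (hFmeas t) (Filter.Eventually.of_forall (hFbd t))
    exact ((integrable_exp_neg_abs' hα).comp_sub_right t).const_mul (β * μ)
  -- derived integrabilities for the tail pieces
  have hG2int : IntegrableOn (fun s => ((1:Op n) - P) (w s)) (Set.Ioi 0) := by
    have h2 : IntegrableOn (fun s => -((U 0) (((1:Op n) - P) (w s)))) (Set.Ioi 0) := by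
      refine ((hFint 0).integrableOn).congr_fun (fun s hs => ?_) measurableSet_Ioi
      dsimp only
      rw [greenG, if_pos (le_of_lt hs), if_neg (not_le.2 hs)]
      simp [ContinuousLinearMap.comp_apply, hwdef]
    have h2' : IntegrableOn (fun s => (U 0) (((1:Op n) - P) (w s))) (Set.Ioi 0) :=
      h2.neg.congr (Filter.Eventually.of_forall fun s => neg_neg _)
    have h3 := (Uinv 0).integrable_comp h2'
    exact h3.congr (Filter.Eventually.of_forall fun s => hUlapp 0 _)
  have hG4int : IntegrableOn (fun s => ((1:Op n) - Q) (w s)) (Set.Iio 0) := by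
    have h2 : IntegrableOn (fun s => (U 0) (((1:Op n) - Q) (w s))) (Set.Iio 0) := by
      refine ((hFint 0).integrableOn).congr_fun (fun s hs => ?_) measurableSet_Iio
      dsimp only
      rw [greenG, if_neg (not_le.2 hs), if_neg (not_le.2 hs)]
      simp [ContinuousLinearMap.comp_apply, hwdef]
    have h3 := (Uinv 0).integrable_comp h2
    exact h3.congr (Filter.Eventually.of_forall fun s => hUlapp 0 _)
  set c : Euc n := (∫ s in Set.Iio (0:ℝ), ((1:Op n) - Q) (w s))
      - ∫ s in Set.Ioi (0:ℝ), ((1:Op n) - P) (w s) with hcdef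
  have key : ∀ t, (∫ s, (greenG U Uinv P Q t s) (h s)) =
      (U t) (c + ∫ s in (0:ℝ)..t, w s) := by
    intro t
    rw [← intervalIntegral.integral_Iio_add_Ici (b := (0:ℝ)) (hFint t).integrableOn (hFint t).integrableOn]
    rcases le_or_gt 0 t with h0t | h0t
    · -- 0 ≤ t
      have e1 : ∫ s in Set.Iio (0:ℝ), (greenG U Uinv P Q t s) (h s)
          = (U t) (∫ s in Set.Iio (0:ℝ), ((1:Op n) - Q) (w s)) := by
        rw [setIntegral_congr_fun (g := fun s => (U t) (((1:Op n) - Q) (w s)))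
            measurableSet_Iio (fun s hs => by
              rw [greenG, if_neg (not_le.2 hs), if_neg (not_le.2 (lt_of_lt_of_le hs h0t))]
              simp [ContinuousLinearMap.comp_apply, hwdef])]
        exact ContinuousLinearMap.integral_comp_comm _ hG4int
      have e2 : ∫ s in Set.Ici (0:ℝ), (greenG U Uinv P Q t s) (h s)
          = (∫ s in Set.Icc (0:ℝ) t, (greenG U Uinv P Q t s) (h s))
            + ∫ s in Set.Ioi t, (greenG U Uinv P Q t s) (h s) := by
        rw [← Set.Icc_union_Ioi_eq_Ici h0t]
        exact setIntegral_union ((Set.Iic_disjoint_Ioi le_rfl).mono_left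
          Set.Icc_subset_Iic_self) measurableSet_Ioi
          (hFint t).integrableOn (hFint t).integrableOn
      have e3 : ∫ s in Set.Icc (0:ℝ) t, (greenG U Uinv P Q t s) (h s)
          = (U t) (∫ s in Set.Icc (0:ℝ) t, P (w s)) := by
        rw [setIntegral_congr_fun (g := fun s => (U t) (P (w s)))
            measurableSet_Icc (fun s hs => by
              rw [greenG, if_pos hs.1, if_pos hs.2]
              simp [ContinuousLinearMap.comp_apply, hwdef])]
        exact ContinuousLinearMap.integral_comp_comm _ (hXw P 0 t)
      have e4 : ∫ s in Set.Ioi t, (greenG U Uinv P Q t s) (h s)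
          = -((U t) (∫ s in Set.Ioi t, ((1:Op n) - P) (w s))) := by
        rw [setIntegral_congr_fun (g := fun s => -((U t) (((1:Op n) - P) (w s))))
            measurableSet_Ioi (fun s hs => by
              rw [greenG, if_pos (h0t.trans hs.le), if_neg (not_le.2 hs)]
              simp [ContinuousLinearMap.comp_apply, hwdef]),
          integral_neg, ContinuousLinearMap.integral_comp_comm _
            (hG2int.mono_set (Set.Ioi_subset_Ioi h0t))]
      have e5 : (∫ s in Set.Ioi (0:ℝ), ((1:Op n) - P) (w s))
          = (∫ s in Set.Ioc (0:ℝ) t, ((1:Op n) - P) (w s))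
            + ∫ s in Set.Ioi t, ((1:Op n) - P) (w s) := by
        rw [← Set.Ioc_union_Ioi_eq_Ioi h0t]
        exact setIntegral_union ((Set.Iic_disjoint_Ioi le_rfl).mono_left
          Set.Ioc_subset_Iic_self) measurableSet_Ioi
          (hG2int.mono_set Set.Ioc_subset_Ioi_self)
          (hG2int.mono_set (Set.Ioi_subset_Ioi h0t))
      have e6 : ∫ s in (0:ℝ)..t, w s
          = (∫ s in Set.Ioc (0:ℝ) t, P (w s))
            + ∫ s in Set.Ioc (0:ℝ) t, ((1:Op n) - P) (w s) := by
        rw [intervalIntegral.integral_of_le h0t,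
          ← integral_add
            ((hXw P 0 t).mono_set Set.Ioc_subset_Icc_self)
            ((hXw ((1:Op n) - P) 0 t).mono_set Set.Ioc_subset_Icc_self)]
        refine setIntegral_congr_fun measurableSet_Ioc fun s hs => ?_
        rw [ContinuousLinearMap.sub_apply, ContinuousLinearMap.one_apply]
        abel
      have e8 : ∫ s in Set.Icc (0:ℝ) t, P (w s) = ∫ s in Set.Ioc (0:ℝ) t, P (w s) :=
        integral_Icc_eq_integral_Ioc
      rw [e1, e2, e3, e4, e8]
      simp only [← map_neg, ← map_add]
      congr 1
      rw [hcdef, e5, e6]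
      abel
    · -- t < 0
      have e1 : ∫ s in Set.Ici (0:ℝ), (greenG U Uinv P Q t s) (h s)
          = -((U t) (∫ s in Set.Ioi (0:ℝ), ((1:Op n) - P) (w s))) := by
        rw [integral_Ici_eq_integral_Ioi,
          setIntegral_congr_fun (g := fun s => -((U t) (((1:Op n) - P) (w s))))
            measurableSet_Ioi (fun s hs => by
              rw [greenG, if_pos hs.le, if_neg (not_le.2 (h0t.trans hs))]
              simp [ContinuousLinearMap.comp_apply, hwdef]),
          integral_neg, ContinuousLinearMap.integral_comp_comm _ hG2int]
      have e2 : ∫ s in Set.Iio (0:ℝ), (greenG U Uinv P Q t s) (h s)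
          = (∫ s in Set.Iio t, (greenG U Uinv P Q t s) (h s))
            + ∫ s in Set.Ico t 0, (greenG U Uinv P Q t s) (h s) := by
        rw [← Set.Iio_union_Ico_eq_Iio h0t.le]
        exact setIntegral_union ((Set.Iio_disjoint_Ici le_rfl).mono_right
          Set.Ico_subset_Ici_self) measurableSet_Ico
          (hFint t).integrableOn (hFint t).integrableOn
      have e3 : ∫ s in Set.Iio t, (greenG U Uinv P Q t s) (h s)
          = (U t) (∫ s in Set.Iio t, ((1:Op n) - Q) (w s)) := by
        rw [setIntegral_congr_fun (g := fun s => (U t) (((1:Op n) - Q) (w s)))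
            measurableSet_Iio (fun s hs => by
              rw [greenG, if_neg (not_le.2 (hs.trans h0t)), if_neg (not_le.2 hs)]
              simp [ContinuousLinearMap.comp_apply, hwdef])]
        exact ContinuousLinearMap.integral_comp_comm _
          (hG4int.mono_set (Set.Iio_subset_Iio h0t.le))
      have e4 : ∫ s in Set.Ico t 0, (greenG U Uinv P Q t s) (h s)
          = -((U t) (∫ s in Set.Ico t 0, Q (w s))) := by
        rw [setIntegral_congr_fun (g := fun s => -((U t) (Q (w s))))
            measurableSet_Ico (fun s hs => by
              rw [greenG, if_neg (not_le.2 hs.2), if_pos hs.1]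
              simp [ContinuousLinearMap.comp_apply, hwdef]),
          integral_neg, ContinuousLinearMap.integral_comp_comm _
            ((hXw Q t 0).mono_set Set.Ico_subset_Icc_self)]
      have e5 : (∫ s in Set.Iio (0:ℝ), ((1:Op n) - Q) (w s))
          = (∫ s in Set.Iio t, ((1:Op n) - Q) (w s))
            + ∫ s in Set.Ico t 0, ((1:Op n) - Q) (w s) := by
        rw [← Set.Iio_union_Ico_eq_Iio h0t.le]
        exact setIntegral_union ((Set.Iio_disjoint_Ici le_rfl).mono_right
          Set.Ico_subset_Ici_self) measurableSet_Ico
          (hG4int.mono_set (Set.Iio_subset_Iio h0t.le))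
          (hG4int.mono_set Set.Ico_subset_Iio_self)
      have e6 : ∫ s in (0:ℝ)..t, w s
          = -((∫ s in Set.Ico t 0, Q (w s))
              + ∫ s in Set.Ico t 0, ((1:Op n) - Q) (w s)) := by
        rw [intervalIntegral.integral_symm, intervalIntegral.integral_of_le h0t.le,
          integral_Ioc_eq_integral_Ioo, ← integral_Ico_eq_integral_Ioo,
          ← integral_add
            ((hXw Q t 0).mono_set Set.Ico_subset_Icc_self)
            ((hXw ((1:Op n) - Q) t 0).mono_set Set.Ico_subset_Icc_self)]
        congr 1
        refine setIntegral_congr_fun measurableSet_Ico fun s hs => ?_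
        rw [ContinuousLinearMap.sub_apply, ContinuousLinearMap.one_apply]
        abel
      rw [e1, e2, e3, e4]
      simp only [← map_neg, ← map_add]
      congr 1
      rw [hcdef, e5, e6]
      abel
  intro t
  have hV : HasDerivAt (fun u => ∫ s in (0:ℝ)..u, w s) (w t) t :=
    intervalIntegral.integral_hasDerivAt_right (hwc.intervalIntegrable 0 t)
      (hwc.stronglyMeasurable.stronglyMeasurableAtFilter) hwc.continuousAt
  have hX : HasDerivAt (fun u => (U u) (c + ∫ s in (0:ℝ)..u, w s))
      (((A t).comp (U t)) (c + ∫ s in (0:ℝ)..t, w s) + (U t) (w t)) t :=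
    (hU t).clm_apply (hV.const_add c)
  have hd : HasDerivAt (fun u => y u + (U u) (c + ∫ s in (0:ℝ)..u, w s))
      (A t (y t) + (((A t).comp (U t)) (c + ∫ s in (0:ℝ)..t, w s) + (U t) (w t))) t :=
    (hy t).add hX
  have hgd : HasDerivAt g
      (A t (y t) + (((A t).comp (U t)) (c + ∫ s in (0:ℝ)..t, w s) + (U t) (w t))) t := by
    refine hd.congr_of_eventuallyEq (Filter.Eventually.of_forall fun u => ?_)
    rw [heq' u, key u]
  convert hgd using 1
  have hgt : g t = y t + (U t) (c + ∫ s in (0:ℝ)..t, w s) := by rw [heq' t, key t]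
  have h1 : (U t) (w t) = f t (g t) := hUrapp t (h t)
  rw [h1, hgt]
  simp only [ContinuousLinearMap.comp_apply, map_add]
  abel
end
end

section
/- Suppose the linear system y' = A(t)y admits an exponential trichotomy with fundamental matrix U, projections P, Q, constants β ≥ 1, α > 0, and Green function G, and let f : ℝ × ℝⁿ → ℝⁿ be continuous and bounded. Let x : ℝ → ℝⁿ be a solution of the nonlinear system x' = A(t)x + f(t,x). Then the function w(t) := x(t) − ∫_{−∞}^{∞} G(t,s) f(s, x(s)) ds is differentiable and satisfies w'(t) = A(t)w(t) for all t, i.e. w is a solution of the linear system. -/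
open MeasureTheory Real

noncomputable section

/-- **(Formula (3.11): `L` maps nonlinear solutions to linear solutions.)**
If `x` solves the nonlinear system, then
`w(t) = x(t) − ∫_{−∞}^{∞} G(t,s) f(s, x(s)) ds` is differentiable and solves the
linear system `w' = A(t)w`. -/
theorem green_integral_solves_linear {n : ℕ} (A U Uinv : ℝ → Op n) (P Q : Op n)
    (β α μ : ℝ) (f : ℝ → Euc n → Euc n) (x : ℝ → Euc n)
    (hA : Continuous A) (hfund : IsFundamental A U Uinv)
    (htri : ExpTrichotomy U Uinv P Q β α)
    (hfc : Continuous fun pr : ℝ × Euc n => f pr.1 pr.2)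
    (hfb : ∀ t x, ‖f t x‖ ≤ μ)
    (hx : IsNonlinSol A f x) :
    ∀ t, HasDerivAt (fun τ => x τ - ∫ s, (greenG U Uinv P Q τ s) (f s (x s)))
      (A t (x t - ∫ s, (greenG U Uinv P Q t s) (f s (x s)))) t := by
  obtain ⟨hU, hUU, hUUi⟩ := hfund
  obtain ⟨hPP, hQQ, hPQ, hPQ1, hβ, hα, hb1, hb2, hb3, hb4⟩ := htri
  have hμ0 : 0 ≤ μ := le_trans (norm_nonneg _) (hfb 0 0)
  have hβ0 : 0 ≤ β := le_trans zero_le_one hβ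
  have hxc : Continuous x := by
    rw [continuous_iff_continuousAt]; exact fun t => (hx t).continuousAt
  have hUc : Continuous U := by
    rw [continuous_iff_continuousAt]; exact fun t => (hU t).continuousAt
  have hUinvc : Continuous Uinv := by
    rw [continuous_iff_continuousAt]
    intro t
    have hmk : ∀ τ : ℝ, ∃ u : (Op n)ˣ, (u : Op n) = U τ ∧ ((u⁻¹ : (Op n)ˣ) : Op n) = Uinv τ := by
      intro τ
      exact ⟨⟨U τ, Uinv τ, by rw [ContinuousLinearMap.mul_def]; exact hUU τ,
        by rw [ContinuousLinearMap.mul_def]; exact hUUi τ⟩, rfl, rfl⟩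
    have hunit : ∀ τ : ℝ, Uinv τ = Ring.inverse (U τ) := by
      intro τ
      obtain ⟨u, hu1, hu2⟩ := hmk τ
      rw [← hu1, Ring.inverse_unit, hu2]
    obtain ⟨u, hu1, _⟩ := hmk t
    have hcont : ContinuousAt (fun τ => Ring.inverse (U τ)) t := by
      apply ContinuousAt.comp (g := Ring.inverse) _ hUc.continuousAt
      rw [← hu1]
      exact NormedRing.inverse_continuousAt u
    simpa only [← hunit] using hcont
  have hgc : Continuous fun s => f s (x s) := hfc.comp (continuous_id.prodMk hxc)
  have hzc : Continuous fun s => Uinv s (f s (x s)) := hUinvc.clm_apply hgc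
  set ψ : Op n → ℝ → Euc n := fun M s => ((U 0).comp (M.comp (Uinv s))) (f s (x s)) with hψdef
  have hψc : ∀ M : Op n, Continuous (ψ M) := by
    intro M
    simp only [hψdef, ContinuousLinearMap.comp_apply]
    exact (U 0).continuous.comp (M.continuous.comp hzc)
  have hψadd : ∀ (R : Op n) (s : ℝ), ψ R s + ψ (1 - R) s = (U 0) (Uinv s (f s (x s))) := by
    intro R s
    simp only [hψdef, ContinuousLinearMap.comp_apply, ContinuousLinearMap.sub_apply,
      ContinuousLinearMap.one_apply, map_sub]
    abel
  -- integrability of the two tails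
  have hexp1 : Integrable ((Set.Ioi (0:ℝ)).indicator fun s => Real.exp (-α * s)) :=
    (MeasureTheory.integrable_indicator_iff measurableSet_Ioi).2 (exp_neg_integrableOn_Ioi 0 hα)
  have hexp3 : (fun s => ((Set.Ioi (0:ℝ)).indicator fun u => Real.exp (-α * u)) (-s))
      = (Set.Iio (0:ℝ)).indicator fun s => Real.exp (α * s) := by
    funext s
    by_cases h : s < 0
    · rw [Set.indicator_of_mem (by rw [Set.mem_Ioi]; exact neg_pos.2 h),
        Set.indicator_of_mem (by exact h)]
      congr 1; ring
    · rw [Set.indicator_of_notMem (by rw [Set.mem_Ioi]; exact fun hh => h (neg_pos.1 hh)),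
        Set.indicator_of_notMem (by exact h)]
  have hexpIio : IntegrableOn (fun s => Real.exp (α * s)) (Set.Iio (0:ℝ)) :=
    (MeasureTheory.integrable_indicator_iff measurableSet_Iio).1 (hexp3 ▸ hexp1.comp_neg)
  have hIQ : IntegrableOn (ψ (1 - Q)) (Set.Iio (0:ℝ)) := by
    refine Integrable.mono' (hexpIio.const_mul (β * μ)) ((hψc _).aestronglyMeasurable) ?_
    filter_upwards [ae_restrict_mem measurableSet_Iio] with s hs
    have hs0 : s ≤ 0 := le_of_lt hs
    calc ‖ψ (1 - Q) s‖ ≤ ‖(U 0).comp ((1 - Q).comp (Uinv s))‖ * ‖f s (x s)‖ :=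
        ContinuousLinearMap.le_opNorm _ _
      _ ≤ (β * Real.exp (-α * (0 - s))) * μ :=
        mul_le_mul (hb4 s 0 hs0 hs0) (hfb s (x s)) (norm_nonneg _)
          (mul_nonneg hβ0 (Real.exp_nonneg _))
      _ = β * μ * Real.exp (α * s) := by rw [show -α * (0 - s) = α * s by ring]; ring
  have hIP : IntegrableOn (ψ (1 - P)) (Set.Ioi (0:ℝ)) := by
    refine Integrable.mono' ((exp_neg_integrableOn_Ioi 0 hα).const_mul (β * μ))
      ((hψc _).aestronglyMeasurable) ?_
    filter_upwards [ae_restrict_mem measurableSet_Ioi] with s hs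
    have hs0 : (0:ℝ) ≤ s := le_of_lt hs
    calc ‖ψ (1 - P) s‖ ≤ ‖(U 0).comp ((1 - P).comp (Uinv s))‖ * ‖f s (x s)‖ :=
        ContinuousLinearMap.le_opNorm _ _
      _ ≤ (β * Real.exp (-α * (s - 0))) * μ :=
        mul_le_mul (hb2 s 0 hs0 hs0) (hfb s (x s)) (norm_nonneg _)
          (mul_nonneg hβ0 (Real.exp_nonneg _))
      _ = β * μ * Real.exp (-α * s) := by rw [show -α * (s - 0) = -α * s by ring]; ring
  set cQ : Euc n := ∫ s in Set.Iio (0:ℝ), ψ (1 - Q) s with hcQ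
  set cP : Euc n := ∫ s in Set.Ioi (0:ℝ), ψ (1 - P) s with hcP
  set CC : Euc n := Uinv 0 (cQ - cP) with hCC
  have hinv0 : ∀ w : Euc n, Uinv 0 (U 0 w) = w := fun w => by
    simpa using ContinuousLinearMap.ext_iff.1 (hUUi 0) w
  have hh0c : Continuous fun s => (U 0) (Uinv s (f s (x s))) := (U 0).continuous.comp hzc
  have hkey : ∀ τ : ℝ, (∫ s, (greenG U Uinv P Q τ s) (f s (x s)))
      = U τ (CC + ∫ s in (0:ℝ)..τ, Uinv s (f s (x s))) := by
    intro τ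
    set ρ : ℝ → Euc n := fun s =>
      if 0 ≤ s then (if s ≤ τ then ψ P s else -ψ (1 - P) s)
      else (if τ ≤ s then -ψ Q s else ψ (1 - Q) s) with hρdef
    have hρeq : ∀ s, (greenG U Uinv P Q τ s) (f s (x s)) = ((U τ).comp (Uinv 0)) (ρ s) := by
      intro s
      by_cases h0 : 0 ≤ s
      · by_cases h1 : s ≤ τ <;>
          simp [greenG, hρdef, h0, h1, hψdef, ContinuousLinearMap.comp_apply,
            ContinuousLinearMap.neg_apply, map_neg, hinv0]
      · by_cases h1 : τ ≤ s <;>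
          simp [greenG, hρdef, h0, h1, hψdef, ContinuousLinearMap.comp_apply,
            ContinuousLinearMap.neg_apply, map_neg, hinv0]
    have main : Integrable ρ ∧
        (∫ s, ρ s) = cQ - cP + ∫ s in (0:ℝ)..τ, (U 0) (Uinv s (f s (x s))) := by
      rcases le_or_gt 0 τ with hτ | hτ
      · -- τ ≥ 0
        have e1 : Set.EqOn (ψ (1 - Q)) ρ (Set.Iio 0) := by
          intro s hs
          have h0 : ¬ (0:ℝ) ≤ s := not_le.2 hs
          have h1 : ¬ τ ≤ s := not_le.2 (lt_of_lt_of_le hs hτ)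
          simp [hρdef, h0, h1]
        have e2 : Set.EqOn (ψ P) ρ (Set.Icc 0 τ) := by
          intro s hs; simp [hρdef, hs.1, hs.2]
        have e3 : Set.EqOn (fun s => -ψ (1 - P) s) ρ (Set.Ioi τ) := by
          intro s hs
          have h0 : (0:ℝ) ≤ s := le_trans hτ (le_of_lt hs)
          have h1 : ¬ s ≤ τ := not_le.2 hs
          simp [hρdef, h0, h1]
        have i1 : IntegrableOn ρ (Set.Iio 0) := hIQ.congr_fun e1 measurableSet_Iio
        have i2 : IntegrableOn ρ (Set.Icc 0 τ) :=
          ((hψc P).integrableOn_Icc).congr_fun e2 measurableSet_Icc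
        have i3 : IntegrableOn ρ (Set.Ioi τ) :=
          MeasureTheory.IntegrableOn.congr_fun ((hIP.mono_set (Set.Ioi_subset_Ioi hτ)).neg) e3 measurableSet_Ioi
        have i23 : IntegrableOn ρ (Set.Ici 0) := by
          rw [← Set.Icc_union_Ioi_eq_Ici hτ]; exact i2.union i3
        have hdisj : Disjoint (Set.Icc (0:ℝ) τ) (Set.Ioi τ) := by
          rw [Set.disjoint_left]; rintro a ⟨_, h2⟩ h3; exact absurd h2 (not_le.2 h3)
        have hdisj2 : Disjoint (Set.Ioc (0:ℝ) τ) (Set.Ioi τ) := by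
          rw [Set.disjoint_left]; rintro a ⟨_, h2⟩ h3; exact absurd h2 (not_le.2 h3)
        refine ⟨?_, ?_⟩
        · rw [← MeasureTheory.integrableOn_univ, ← Set.Iio_union_Ici (a := (0:ℝ))]
          exact i1.union i23
        · have hIi : (∫ s, ρ s)
              = (∫ s in Set.Iio (0:ℝ), ρ s) + ∫ s in Set.Ici (0:ℝ), ρ s :=
            (intervalIntegral.integral_Iio_add_Ici i1 i23).symm
          have hsplit : (∫ s in Set.Ici (0:ℝ), ρ s)
              = (∫ s in Set.Icc (0:ℝ) τ, ρ s) + ∫ s in Set.Ioi τ, ρ s := by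
            rw [← Set.Icc_union_Ioi_eq_Ici hτ]
            exact MeasureTheory.setIntegral_union hdisj measurableSet_Ioi i2 i3
          have hIio : (∫ s in Set.Iio (0:ℝ), ρ s) = cQ :=
            (MeasureTheory.setIntegral_congr_fun measurableSet_Iio e1).symm
          have hIccρ : (∫ s in Set.Icc (0:ℝ) τ, ρ s) = ∫ s in Set.Icc (0:ℝ) τ, ψ P s :=
            (MeasureTheory.setIntegral_congr_fun measurableSet_Icc e2).symm
          have hPsub : ψ P = fun s => (U 0) (Uinv s (f s (x s))) - ψ (1 - P) s := by
            funext s; exact eq_sub_of_add_eq (hψadd P s)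
          have ih0 : IntegrableOn (fun s => (U 0) (Uinv s (f s (x s)))) (Set.Icc (0:ℝ) τ) :=
            hh0c.integrableOn_Icc
          have ihP : IntegrableOn (ψ (1 - P)) (Set.Icc (0:ℝ) τ) := (hψc _).integrableOn_Icc
          have hIcc : (∫ s in Set.Icc (0:ℝ) τ, ψ P s)
              = (∫ s in Set.Icc (0:ℝ) τ, (U 0) (Uinv s (f s (x s))))
                - ∫ s in Set.Icc (0:ℝ) τ, ψ (1 - P) s := by
            rw [show (∫ s in Set.Icc (0:ℝ) τ, ψ P s)
                = ∫ s in Set.Icc (0:ℝ) τ, ((U 0) (Uinv s (f s (x s))) - ψ (1 - P) s) from by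
              rw [hPsub]]
            exact MeasureTheory.integral_sub ih0 ihP
          have hIoi : (∫ s in Set.Ioi τ, ρ s) = - ∫ s in Set.Ioi τ, ψ (1 - P) s := by
            rw [← MeasureTheory.setIntegral_congr_fun measurableSet_Ioi e3,
              MeasureTheory.integral_neg]
          have hcPsplit : cP
              = (∫ s in Set.Icc (0:ℝ) τ, ψ (1 - P) s) + ∫ s in Set.Ioi τ, ψ (1 - P) s := by
            rw [hcP, show Set.Ioi (0:ℝ) = Set.Ioc 0 τ ∪ Set.Ioi τ from
                (Set.Ioc_union_Ioi_eq_Ioi hτ).symm,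
              MeasureTheory.setIntegral_union hdisj2 measurableSet_Ioi
                (ihP.mono_set Set.Ioc_subset_Icc_self) (hIP.mono_set (Set.Ioi_subset_Ioi hτ)),
              ← MeasureTheory.integral_Icc_eq_integral_Ioc]
          have hIcc0 : (∫ s in Set.Icc (0:ℝ) τ, (U 0) (Uinv s (f s (x s))))
              = ∫ s in (0:ℝ)..τ, (U 0) (Uinv s (f s (x s))) := by
            rw [intervalIntegral.integral_of_le hτ, MeasureTheory.integral_Icc_eq_integral_Ioc]
          rw [hIi, hsplit, hIio, hIccρ, hIcc, hIoi, hcPsplit, hIcc0]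
          abel
      · -- τ < 0
        have hτ' : τ ≤ 0 := le_of_lt hτ
        have e1 : Set.EqOn (fun s => -ψ (1 - P) s) ρ (Set.Ici 0) := by
          intro s hs
          have h0 : (0:ℝ) ≤ s := hs
          have h1 : ¬ s ≤ τ := not_le.2 (lt_of_lt_of_le hτ h0)
          simp [hρdef, h0, h1]
        have e2 : Set.EqOn (fun s => -ψ Q s) ρ (Set.Ico τ 0) := by
          intro s hs
          have h0 : ¬ (0:ℝ) ≤ s := not_le.2 hs.2
          simp [hρdef, h0, hs.1]
        have e3 : Set.EqOn (ψ (1 - Q)) ρ (Set.Iio τ) := by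
          intro s hs
          have h0 : ¬ (0:ℝ) ≤ s := not_le.2 (lt_trans hs hτ)
          have h1 : ¬ τ ≤ s := not_le.2 hs
          simp [hρdef, h0, h1]
        have hsub : Set.Ico τ (0:ℝ) ⊆ Set.Iio 0 := fun a ha => ha.2
        have iIci : IntegrableOn ρ (Set.Ici 0) :=
          MeasureTheory.IntegrableOn.congr_fun (((integrableOn_Ici_iff_integrableOn_Ioi).2 hIP).neg) e1 measurableSet_Ici
        have iQIcc : IntegrableOn (ψ Q) (Set.Icc τ (0:ℝ)) := (hψc Q).integrableOn_Icc
        have iIco : IntegrableOn ρ (Set.Ico τ 0) :=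
          MeasureTheory.IntegrableOn.congr_fun ((iQIcc.mono_set Set.Ico_subset_Icc_self).neg) e2 measurableSet_Ico
        have iIioτ : IntegrableOn ρ (Set.Iio τ) :=
          (hIQ.mono_set (Set.Iio_subset_Iio hτ')).congr_fun e3 measurableSet_Iio
        have iIio : IntegrableOn ρ (Set.Iio 0) := by
          rw [← Set.Iio_union_Ico_eq_Iio hτ']; exact iIioτ.union iIco
        have hdisj : Disjoint (Set.Iio τ) (Set.Ico τ 0) := by
          rw [Set.disjoint_left]; rintro a h1 ⟨h2, _⟩; exact absurd h2 (not_le.2 h1)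
        refine ⟨?_, ?_⟩
        · rw [← MeasureTheory.integrableOn_univ, ← Set.Iio_union_Ici (a := (0:ℝ))]
          exact iIio.union iIci
        · have hIi : (∫ s, ρ s)
              = (∫ s in Set.Iio (0:ℝ), ρ s) + ∫ s in Set.Ici (0:ℝ), ρ s :=
            (intervalIntegral.integral_Iio_add_Ici iIio iIci).symm
          have h1 : (∫ s in Set.Ici (0:ℝ), ρ s) = -cP := by
            rw [← MeasureTheory.setIntegral_congr_fun measurableSet_Ici e1,
              MeasureTheory.integral_neg, MeasureTheory.integral_Ici_eq_integral_Ioi, hcP]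
          have h2 : (∫ s in Set.Iio (0:ℝ), ρ s)
              = (∫ s in Set.Iio τ, ψ (1 - Q) s) - ∫ s in Set.Ico τ 0, ψ Q s := by
            rw [← Set.Iio_union_Ico_eq_Iio hτ',
              MeasureTheory.setIntegral_union hdisj measurableSet_Ico iIioτ iIco,
              ← MeasureTheory.setIntegral_congr_fun measurableSet_Iio e3,
              ← MeasureTheory.setIntegral_congr_fun measurableSet_Ico e2,
              MeasureTheory.integral_neg]
            abel
          have h3 : cQ = (∫ s in Set.Iio τ, ψ (1 - Q) s) + ∫ s in Set.Ico τ 0, ψ (1 - Q) s := by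
            rw [hcQ, show Set.Iio (0:ℝ) = Set.Iio τ ∪ Set.Ico τ 0 from
                (Set.Iio_union_Ico_eq_Iio hτ').symm,
              MeasureTheory.setIntegral_union hdisj measurableSet_Ico
                (hIQ.mono_set (Set.Iio_subset_Iio hτ')) (hIQ.mono_set hsub)]
          have iQ1 : IntegrableOn (ψ Q) (Set.Ico τ (0:ℝ)) :=
            iQIcc.mono_set Set.Ico_subset_Icc_self
          have iQ2 : IntegrableOn (ψ (1 - Q)) (Set.Ico τ (0:ℝ)) := hIQ.mono_set hsub
          have h4 : (∫ s in Set.Ico τ (0:ℝ), (U 0) (Uinv s (f s (x s))))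
              = (∫ s in Set.Ico τ 0, ψ Q s) + ∫ s in Set.Ico τ 0, ψ (1 - Q) s := by
            rw [← MeasureTheory.integral_add iQ1 iQ2]
            exact MeasureTheory.setIntegral_congr_fun measurableSet_Ico
              fun s _ => (hψadd Q s).symm
          have h5 : (∫ s in (0:ℝ)..τ, (U 0) (Uinv s (f s (x s))))
              = - ∫ s in Set.Ico τ (0:ℝ), (U 0) (Uinv s (f s (x s))) := by
            rw [intervalIntegral.integral_symm τ 0, intervalIntegral.integral_of_le hτ',
              MeasureTheory.integral_Ioc_eq_integral_Ioo,
              ← MeasureTheory.integral_Ico_eq_integral_Ioo]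
          rw [hIi, h1, h2, h3, h5, h4]
          abel
    obtain ⟨hρint, htot⟩ := main
    calc (∫ s, (greenG U Uinv P Q τ s) (f s (x s)))
        = ∫ s, ((U τ).comp (Uinv 0)) (ρ s) := by simp only [hρeq]
      _ = ((U τ).comp (Uinv 0)) (∫ s, ρ s) :=
          ((U τ).comp (Uinv 0)).integral_comp_comm hρint
      _ = U τ (CC + ∫ s in (0:ℝ)..τ, Uinv s (f s (x s))) := by
          rw [htot, ContinuousLinearMap.comp_apply]
          congr 1
          rw [map_add, hCC]
          congr 1
          rw [← ContinuousLinearMap.intervalIntegral_comp_comm _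
            (hh0c.intervalIntegrable _ _)]
          exact intervalIntegral.integral_congr fun s _ => hinv0 _
  intro t
  have happt : ∀ w : Euc n, U t (Uinv t w) = w := fun w => by
    simpa using ContinuousLinearMap.ext_iff.1 (hUU t) w
  have hJ : HasDerivAt (fun τ => ∫ s in (0:ℝ)..τ, Uinv s (f s (x s))) (Uinv t (f t (x t))) t :=
    intervalIntegral.integral_hasDerivAt_right (hzc.intervalIntegrable _ _)
      (hzc.stronglyMeasurableAtFilter _ _) hzc.continuousAt
  have hF := (hU t).clm_apply ((hasDerivAt_const t CC).add hJ)
  have hw := (hx t).sub hF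
  simp only [hkey]
  refine hw.congr_deriv ?_
  simp only [ContinuousLinearMap.comp_apply, Pi.add_apply, map_sub, map_add, happt, zero_add]
  abel
end
end

section
/- Suppose the linear system y' = A(t)y admits an exponential trichotomy with fundamental matrix U, projections P, Q, constants β ≥ 1, α > 0, and Green function G; let f : ℝ × ℝⁿ → ℝⁿ satisfy |f(t,x₁) − f(t,x₂)| ≤ γ|x₁ − x₂| with 3βγα⁻¹ < 1. If g, x : ℝ → ℝⁿ are bounded continuous functions such that g(t) − x(t) = ∫_{−∞}^{∞} G(t,s)(f(s,g(s)) − f(s,x(s))) ds for all t ∈ ℝ, then g = x. -/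
open MeasureTheory Real

noncomputable section

namespace GreenAux

open Set Filter

lemma myInt (α : ℝ) (hα : 0 < α) : Integrable (fun u : ℝ => Real.exp (-(α * |u|))) := by
  have h1 : IntegrableOn (fun u : ℝ => Real.exp (-(α * |u|))) (Ioi 0) := by
    refine ((exp_neg_integrableOn_Ioi 0 hα).congr_fun (fun u hu => ?_) measurableSet_Ioi)
    rw [abs_of_pos (by exact hu)]; simp only [neg_mul]
  have h2 : IntegrableOn (fun u : ℝ => Real.exp (-(α * |u|))) (Iic 0) := by
    rw [← Measure.map_neg_eq_self (volume : Measure ℝ)]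
    have m : MeasurableEmbedding fun x : ℝ => -x := (Homeomorph.neg ℝ).measurableEmbedding
    rw [m.integrableOn_map_iff]
    simp_rw [Function.comp_def, abs_neg, neg_preimage, neg_Iic, neg_zero]
    exact Iff.mpr integrableOn_Ici_iff_integrableOn_Ioi h1
  rw [← integrableOn_univ, ← Iic_union_Ioi (a := (0:ℝ))]
  exact h2.union h1

lemma myVal (α : ℝ) (hα : 0 < α) : ∫ u : ℝ, Real.exp (-(α * |u|)) = 2 / α := by
  have := integral_comp_abs (f := fun u : ℝ => Real.exp (-(α * u)))
  rw [this]
  have h := integral_comp_mul_left_Ioi (fun x : ℝ => Real.exp (-x)) 0 hα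
  simp only [mul_zero, smul_eq_mul] at h
  calc 2 * ∫ u in Ioi (0:ℝ), Real.exp (-(α * u))
      = 2 * (α⁻¹ * ∫ x in Ioi (0:ℝ), Real.exp (-x)) := by rw [← h]
    _ = 2 / α := by rw [integral_exp_neg_Ioi_zero]; ring

lemma greenG_norm_le {n : ℕ} (U Uinv : ℝ → Op n) (P Q : Op n) {β α : ℝ}
    (htri : ExpTrichotomy U Uinv P Q β α) (t s : ℝ) :
    ‖greenG U Uinv P Q t s‖ ≤ β * Real.exp (-(α * |t - s|)) := by
  obtain ⟨_, _, _, _, hβ, hα, h1, h2, h3, h4⟩ := htri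
  unfold greenG
  split_ifs with hs hst hts
  · rw [abs_of_nonneg (sub_nonneg.mpr hst), ← neg_mul]
    exact h1 s t hs hst
  · push_neg at hst
    rw [norm_neg, abs_sub_comm, abs_of_nonneg (sub_nonneg.mpr hst.le), ← neg_mul]
    exact h2 s t hst.le hs
  · push_neg at hs
    rw [norm_neg, abs_sub_comm, abs_of_nonneg (sub_nonneg.mpr hts), ← neg_mul]
    exact h3 s t hts hs.le
  · push_neg at hs hts
    rw [abs_of_nonneg (sub_nonneg.mpr hts.le), ← neg_mul]
    exact h4 s t hts.le hs.le

end GreenAux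

/-- **(Formula (3.14): the key uniqueness identity.)**
If `f` is `γ`-Lipschitz with `3βγα⁻¹ < 1` and the bounded continuous functions `g, x`
satisfy `g(t) − x(t) = ∫_{−∞}^{∞} G(t,s)(f(s,g(s)) − f(s,x(s))) ds`, then `g = x`.
This is the key step proving `H(t, L(t,x)) = x`. -/
theorem green_integral_contraction_eq {n : ℕ} (A U Uinv : ℝ → Op n) (P Q : Op n)
    (β α γ : ℝ) (f : ℝ → Euc n → Euc n) (g x : ℝ → Euc n)
    (hA : Continuous A) (hfund : IsFundamental A U Uinv)
    (htri : ExpTrichotomy U Uinv P Q β α)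
    (hflip : ∀ t x₁ x₂, ‖f t x₁ - f t x₂‖ ≤ γ * ‖x₁ - x₂‖)
    (hsmall : 3 * β * γ * α⁻¹ < 1)
    (hgc : Continuous g) (hgb : ∃ C, ∀ t, ‖g t‖ ≤ C)
    (hxc : Continuous x) (hxb : ∃ C, ∀ t, ‖x t‖ ≤ C)
    (heq : ∀ t, g t - x t =
      ∫ s, (greenG U Uinv P Q t s) (f s (g s) - f s (x s))) :
    g = x := by
  obtain ⟨Cg, hCg⟩ := hgb
  obtain ⟨Cx, hCx⟩ := hxb
  obtain ⟨-, -, -, -, hβ, hα, -⟩ := id htri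
  have hβ0 : (0:ℝ) < β := lt_of_lt_of_le one_pos hβ
  set γ' := max γ 0 with hγ'def
  have hγ'0 : 0 ≤ γ' := le_max_right _ _
  have hflip' : ∀ t x₁ x₂, ‖f t x₁ - f t x₂‖ ≤ γ' * ‖x₁ - x₂‖ := fun t a b =>
    (hflip t a b).trans (mul_le_mul_of_nonneg_right (le_max_left _ _) (norm_nonneg _))
  have hsmall' : 3 * β * γ' * α⁻¹ < 1 := by
    rcases le_or_gt 0 γ with h | h
    · rwa [hγ'def, max_eq_left h]
    · rw [hγ'def, max_eq_right h.le]
      simp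
  set k := 3 * β * γ' * α⁻¹ with hkdef
  have hk0 : 0 ≤ k :=
    mul_nonneg (mul_nonneg (mul_nonneg (by norm_num) hβ0.le) hγ'0) (inv_nonneg.mpr hα.le)
  have key : ∀ C : ℝ, 0 ≤ C → (∀ s, ‖g s - x s‖ ≤ C) → ∀ t, ‖g t - x t‖ ≤ k * C := by
    intro C hC hbound t
    rw [heq t]
    have hIntBase : Integrable (fun s : ℝ => Real.exp (-(α * |t - s|))) := by
      have := (GreenAux.myInt α hα).comp_sub_right t
      simpa [abs_sub_comm] using this
    have hInt : Integrable (fun s : ℝ => β * γ' * C * Real.exp (-(α * |t - s|))) :=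
      hIntBase.const_mul _
    have hbd : ∀ s, ‖(greenG U Uinv P Q t s) (f s (g s) - f s (x s))‖ ≤
        β * γ' * C * Real.exp (-(α * |t - s|)) := by
      intro s
      calc ‖(greenG U Uinv P Q t s) (f s (g s) - f s (x s))‖
          ≤ ‖greenG U Uinv P Q t s‖ * ‖f s (g s) - f s (x s)‖ :=
            ContinuousLinearMap.le_opNorm _ _
        _ ≤ (β * Real.exp (-(α * |t - s|))) * (γ' * C) := by
            apply mul_le_mul (GreenAux.greenG_norm_le U Uinv P Q htri t s)
              ((hflip' s (g s) (x s)).trans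
                (mul_le_mul_of_nonneg_left (hbound s) hγ'0))
              (norm_nonneg _)
              (mul_nonneg hβ0.le (Real.exp_pos _).le)
        _ = β * γ' * C * Real.exp (-(α * |t - s|)) := by ring
    have hnorm := norm_integral_le_of_norm_le hInt (Filter.Eventually.of_forall hbd)
    refine hnorm.trans ?_
    have hval : ∫ s : ℝ, Real.exp (-(α * |t - s|)) = 2 / α := by
      rw [show (fun s : ℝ => Real.exp (-(α * |t - s|)))
          = fun s : ℝ => Real.exp (-(α * |s - t|)) by funext s; rw [abs_sub_comm]]
      rw [integral_sub_right_eq_self (fun u : ℝ => Real.exp (-(α * |u|))) t]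
      exact GreenAux.myVal α hα
    rw [integral_const_mul, hval, hkdef]
    have hkey : 0 ≤ β * γ' * C * α⁻¹ :=
      mul_nonneg (mul_nonneg (mul_nonneg hβ0.le hγ'0) hC) (inv_nonneg.mpr hα.le)
    rw [div_eq_mul_inv]
    nlinarith [hkey]
  set C₀ := max (Cg + Cx) 0 with hC₀def
  have hC₀0 : 0 ≤ C₀ := le_max_right _ _
  have hC₀ : ∀ s, ‖g s - x s‖ ≤ C₀ := fun s =>
    (norm_sub_le _ _).trans ((add_le_add (hCg s) (hCx s)).trans (le_max_left _ _))
  have iter : ∀ m : ℕ, ∀ t, ‖g t - x t‖ ≤ k ^ m * C₀ := by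
    intro m
    induction m with
    | zero => simpa using hC₀
    | succ m ih =>
      intro t
      calc ‖g t - x t‖ ≤ k * (k ^ m * C₀) :=
            key (k ^ m * C₀) (mul_nonneg (pow_nonneg hk0 m) hC₀0) ih t
        _ = k ^ (m + 1) * C₀ := by ring
  funext t
  have htend : Filter.Tendsto (fun m : ℕ => k ^ m * C₀) Filter.atTop (nhds 0) := by
    simpa using (tendsto_pow_atTop_nhds_zero_of_lt_one hk0 hsmall').mul_const C₀
  have hle : ‖g t - x t‖ ≤ 0 :=
    ge_of_tendsto htend (Filter.Eventually.of_forall fun m => iter m t)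
  exact sub_eq_zero.mp (norm_le_zero_iff.mp hle)
end
end

section
/- Suppose the linear system y' = A(t)y has fundamental matrix U admitting an exponential trichotomy with constants β ≥ 1, α > 0 and decomposition projections P₁, P₂, P₃, P₄ (P = P₁+P₂+P₃, Q = P₂+P₃+P₄) with ‖U(t)P₁U(s)⁻¹‖ ≤ κ₁ and ‖U(t)P₄U(s)⁻¹‖ ≤ κ₂ for all t, s ∈ ℝ. Let f be continuous with |f(t,x)| ≤ φ(t), |f(t,x₁) − f(t,x₂)| ≤ ψ(t)|x₁ − x₂|, ∫_{−∞}^{∞}φ < c₁, ∫_{−∞}^{∞}ψ < c₂, and (β + 2κ₁ + κ₂)c₂ < 1. Then there exists a unique continuous map ϱ : ℝ × ℝⁿ → ℝⁿ with sup_{(t,η)}|ϱ(t,η)| ≤ (β + 2κ₁ + κ₂)c₁ satisfying, for all t, η (with Y(s) = U(s)U(t)⁻¹η and F(s) = f(s, Y(s) + ϱ(s, Y(s)))): ϱ(t,η) = ∫_{−∞}^{t} U(t)P₁U(s)⁻¹F(s)ds + ∫_{0}^{t} U(t)(P₂+P₃)U(s)⁻¹F(s)ds − ∫_{t}^{∞}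 U(t)P₄U(s)⁻¹F(s)ds. -/
open MeasureTheory Real

noncomputable section

namespace FPR

variable {n : ℕ}

lemma continuous_Uinv (U Uinv : ℝ → Op n) (hU : Continuous U)
    (h1 : ∀ t, (U t).comp (Uinv t) = 1) (h2 : ∀ t, (Uinv t).comp (U t) = 1) :
    Continuous Uinv := by
  have key : Uinv = fun t => Ring.inverse (U t) := by
    funext t
    have hu : Ring.inverse ((⟨U t, Uinv t, by rw [ContinuousLinearMap.mul_def]; exact h1 t,
        by rw [ContinuousLinearMap.mul_def]; exact h2 t⟩ : (Op n)ˣ) : Op n)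
        = Uinv t := Ring.inverse_unit _
    simpa using hu.symm
  rw [key]
  refine continuous_iff_continuousAt.mpr fun t => ?_
  have hinv : ContinuousAt Ring.inverse (U t) := NormedRing.inverse_continuousAt
    (⟨U t, Uinv t, by rw [ContinuousLinearMap.mul_def]; exact h1 t,
      by rw [ContinuousLinearMap.mul_def]; exact h2 t⟩ : (Op n)ˣ)
  exact hinv.comp hU.continuousAt

lemma continuous_sandwich (U Uinv : ℝ → Op n) (hU : Continuous U) (hV : Continuous Uinv)
    (M : Op n) : Continuous fun p : ℝ × ℝ => (U p.1).comp (M.comp (Uinv p.2)) := by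
  have : (fun p : ℝ × ℝ => (U p.1).comp (M.comp (Uinv p.2)))
      = fun p : ℝ × ℝ => U p.1 * (M * Uinv p.2) := by
    funext p; rw [ContinuousLinearMap.mul_def, ContinuousLinearMap.mul_def]
  rw [this]
  exact (hU.comp continuous_fst).mul (continuous_const.mul (hV.comp continuous_snd))

lemma green_bound (U Uinv : ℝ → Op n) (P Q P₁ P₂₃ P₄ : Op n) (β κ₁ κ₂ : ℝ)
    (hβ : 0 ≤ β) (hκ₁0 : 0 ≤ κ₁) (hκ₂0 : 0 ≤ κ₂)
    (hP : ∀ s t : ℝ, 0 ≤ s → s ≤ t → ‖(U t).comp (P.comp (Uinv s))‖ ≤ β)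
    (hQ : ∀ s t : ℝ, t ≤ s → s ≤ 0 → ‖(U t).comp (Q.comp (Uinv s))‖ ≤ β)
    (hPsum : P = P₁ + P₂₃) (hQsum : Q = P₂₃ + P₄)
    (hk1 : ∀ t s, ‖(U t).comp (P₁.comp (Uinv s))‖ ≤ κ₁)
    (hk2 : ∀ t s, ‖(U t).comp (P₄.comp (Uinv s))‖ ≤ κ₂)
    (t s : ℝ) : ‖greenGt U Uinv P₁ P₂₃ P₄ t s‖ ≤ β + κ₁ + κ₂ := by
  set A := (U t).comp (P₁.comp (Uinv s)) with hA
  set B := (U t).comp (P₂₃.comp (Uinv s)) with hB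
  set C := (U t).comp (P₄.comp (Uinv s)) with hC
  have combP : ∀ s' t' : ℝ, 0 ≤ s' → s' ≤ t' →
      ‖(U t').comp (P₁.comp (Uinv s')) + (U t').comp (P₂₃.comp (Uinv s'))‖ ≤ β := by
    intro s' t' h0 hst
    rw [← ContinuousLinearMap.comp_add, ← ContinuousLinearMap.add_comp, ← hPsum]
    exact hP s' t' h0 hst
  have combQ : ∀ s' t' : ℝ, t' ≤ s' → s' ≤ 0 →
      ‖(U t').comp (P₂₃.comp (Uinv s')) + (U t').comp (P₄.comp (Uinv s'))‖ ≤ β := by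
    intro s' t' hst h0
    rw [← ContinuousLinearMap.comp_add, ← ContinuousLinearMap.add_comp, ← hQsum]
    exact hQ s' t' hst h0
  unfold greenGt
  rw [← hA, ← hB, ← hC]
  split_ifs with h1 h2 h3 h4 h5 h6 h7 h8 h9 h10 h11 h12
  · calc ‖A + B - C‖ ≤ ‖A + B‖ + ‖C‖ := norm_sub_le _ _
      _ ≤ β + κ₂ := add_le_add (combP s t h2.1 h2.2) (hk2 t s)
      _ ≤ β + κ₁ + κ₂ := by linarith
  · calc ‖A + B - 0‖ = ‖A + B‖ := by rw [sub_zero]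
      _ ≤ β := combP s t h2.1 h2.2
      _ ≤ β + κ₁ + κ₂ := by linarith
  · have e : A + -B - C = A - (B + C) := by abel
    calc ‖A + -B - C‖ = ‖A - (B + C)‖ := by rw [e]
      _ ≤ ‖A‖ + ‖B + C‖ := norm_sub_le _ _
      _ ≤ κ₁ + β := add_le_add (hk1 t s) (combQ s t h4.1 h4.2)
      _ ≤ β + κ₁ + κ₂ := by linarith
  · exact absurd h4.1 h5
  · exfalso
    have hs0 : ¬ 0 ≤ s := fun h0 => h2 ⟨h0, h1⟩
    exact h4 ⟨h6, le_of_lt (lt_of_not_ge hs0)⟩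
  · calc ‖A + 0 - 0‖ = ‖A‖ := by rw [add_zero, sub_zero]
      _ ≤ κ₁ := hk1 t s
      _ ≤ β + κ₁ + κ₂ := by linarith
  · exact absurd h7.2 h1
  · exact absurd h7.2 h1
  · have e : (0 : Op n) + -B - C = -(B + C) := by abel
    calc ‖(0 : Op n) + -B - C‖ = ‖B + C‖ := by rw [e, norm_neg]
      _ ≤ β := combQ s t h9.1 h9.2
      _ ≤ β + κ₁ + κ₂ := by linarith
  · exact absurd h9.1 h10
  · calc ‖(0 : Op n) + 0 - C‖ = ‖C‖ := by rw [add_zero, zero_sub, norm_neg]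
      _ ≤ κ₂ := hk2 t s
      _ ≤ β + κ₁ + κ₂ := by linarith
  · exact absurd (le_of_lt (lt_of_not_ge h1)) h11
lemma green_meas (U Uinv : ℝ → Op n) (P₁ P₂₃ P₄ : Op n) (hU : Continuous U)
    (hV : Continuous Uinv) (t : ℝ) :
    StronglyMeasurable fun s => greenGt U Uinv P₁ P₂₃ P₄ t s := by
  have hc : ∀ M : Op n, Continuous fun s : ℝ => (U t).comp (M.comp (Uinv s)) := fun M =>
    (continuous_sandwich U Uinv hU hV M).comp (continuous_const.prodMk continuous_id)
  refine StronglyMeasurable.sub (StronglyMeasurable.add ?_ ?_) ?_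
  · exact StronglyMeasurable.ite measurableSet_Iic (hc P₁).stronglyMeasurable
      stronglyMeasurable_const
  · exact StronglyMeasurable.ite (measurableSet_Icc (a := (0:ℝ)) (b := t))
      (hc P₂₃).stronglyMeasurable
      (StronglyMeasurable.ite (measurableSet_Icc (a := t) (b := (0:ℝ)))
        (hc P₂₃).neg.stronglyMeasurable stronglyMeasurable_const)
  · exact StronglyMeasurable.ite measurableSet_Ici (hc P₄).stronglyMeasurable
      stronglyMeasurable_const

lemma green_apply_meas (U Uinv : ℝ → Op n) (P₁ P₂₃ P₄ : Op n) (hU : Continuous U)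
    (hV : Continuous Uinv) (t : ℝ) (G : ℝ → Euc n) (hGc : Continuous G) :
    StronglyMeasurable fun s => greenGt U Uinv P₁ P₂₃ P₄ t s (G s) := by
  have h1 := (green_meas U Uinv P₁ P₂₃ P₄ hU hV t).prodMk hGc.stronglyMeasurable
  exact isBoundedBilinearMap_apply.continuous.comp_stronglyMeasurable h1

lemma green_apply_integrable (U Uinv : ℝ → Op n) (P₁ P₂₃ P₄ : Op n)
    (hU : Continuous U) (hV : Continuous Uinv) (φ : ℝ → ℝ) (hφint : Integrable φ)
    (Bc : ℝ) (t : ℝ) (hGb : ∀ s, ‖greenGt U Uinv P₁ P₂₃ P₄ t s‖ ≤ Bc)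
    (G : ℝ → Euc n) (hGc : Continuous G) (hGb' : ∀ s, ‖G s‖ ≤ φ s) :
    Integrable fun s => greenGt U Uinv P₁ P₂₃ P₄ t s (G s) := by
  have hBc0 : 0 ≤ Bc := le_trans (norm_nonneg _) (hGb 0)
  refine Integrable.mono' (hφint.const_mul Bc)
    (green_apply_meas U Uinv P₁ P₂₃ P₄ hU hV t G hGc).aestronglyMeasurable
    (Filter.Eventually.of_forall fun s => ?_)
  calc ‖greenGt U Uinv P₁ P₂₃ P₄ t s (G s)‖
      ≤ ‖greenGt U Uinv P₁ P₂₃ P₄ t s‖ * ‖G s‖ := ContinuousLinearMap.le_opNorm _ _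
    _ ≤ Bc * φ s := mul_le_mul (hGb s) (hGb' s) (norm_nonneg _) hBc0
lemma green_integral_split (U Uinv : ℝ → Op n) (P₁ P₂₃ P₄ : Op n)
    (hU : Continuous U) (hV : Continuous Uinv) (φ : ℝ → ℝ) (hφ0 : ∀ s, 0 ≤ φ s)
    (hφint : Integrable φ) (κ₁ κ₂ Bm : ℝ) (hBm0 : 0 ≤ Bm)
    (hk1 : ∀ t s, ‖(U t).comp (P₁.comp (Uinv s))‖ ≤ κ₁)
    (hk2 : ∀ t s, ‖(U t).comp (P₄.comp (Uinv s))‖ ≤ κ₂)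
    (hmid : ∀ t s : ℝ, (0 ≤ s ∧ s ≤ t) ∨ (t ≤ s ∧ s ≤ 0) →
      ‖(U t).comp (P₂₃.comp (Uinv s))‖ ≤ Bm)
    (t : ℝ) (G : ℝ → Euc n) (hGc : Continuous G) (hGb : ∀ s, ‖G s‖ ≤ φ s) :
    ∫ s, greenGt U Uinv P₁ P₂₃ P₄ t s (G s) =
      (∫ s in Set.Iic t, ((U t).comp (P₁.comp (Uinv s))) (G s))
      + (∫ s in (0:ℝ)..t, ((U t).comp (P₂₃.comp (Uinv s))) (G s))
      - (∫ s in Set.Ici t, ((U t).comp (P₄.comp (Uinv s))) (G s)) := by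
  have hκ₁0 : 0 ≤ κ₁ := le_trans (norm_nonneg _) (hk1 0 0)
  have hκ₂0 : 0 ≤ κ₂ := le_trans (norm_nonneg _) (hk2 0 0)
  have hc : ∀ M : Op n, Continuous fun s : ℝ => (U t).comp (M.comp (Uinv s)) := fun M =>
    (continuous_sandwich U Uinv hU hV M).comp (continuous_const.prodMk continuous_id)
  set g1 : ℝ → Euc n := fun s => ((U t).comp (P₁.comp (Uinv s))) (G s) with hg1
  set g2 : ℝ → Euc n := fun s => ((U t).comp (P₂₃.comp (Uinv s))) (G s) with hg2
  set g4 : ℝ → Euc n := fun s => ((U t).comp (P₄.comp (Uinv s))) (G s) with hg4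
  have hg1c : Continuous g1 := (hc P₁).clm_apply hGc
  have hg2c : Continuous g2 := (hc P₂₃).clm_apply hGc
  have hg4c : Continuous g4 := (hc P₄).clm_apply hGc
  set m : ℝ → Euc n := fun s =>
    if 0 ≤ s ∧ s ≤ t then g2 s else if t ≤ s ∧ s ≤ 0 then -g2 s else 0 with hm
  have key : ∀ s, greenGt U Uinv P₁ P₂₃ P₄ t s (G s)
      = (Set.Iic t).indicator g1 s + m s - (Set.Ici t).indicator g4 s := by
    intro s
    simp only [greenGt, ContinuousLinearMap.sub_apply, ContinuousLinearMap.add_apply,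
      apply_ite (fun L : Op n => L (G s)), ContinuousLinearMap.zero_apply,
      ContinuousLinearMap.neg_apply, Set.indicator_apply, Set.mem_Iic, Set.mem_Ici,
      hm, hg1, hg2, hg4]
  have int1 : Integrable ((Set.Iic t).indicator g1) := by
    refine Integrable.mono' (hφint.const_mul κ₁)
      ((hg1c.stronglyMeasurable.indicator measurableSet_Iic).aestronglyMeasurable)
      (Filter.Eventually.of_forall fun s => ?_)
    by_cases hs : s ∈ Set.Iic t
    · rw [Set.indicator_of_mem hs]
      calc ‖g1 s‖ ≤ ‖(U t).comp (P₁.comp (Uinv s))‖ * ‖G s‖ :=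
            ContinuousLinearMap.le_opNorm _ _
        _ ≤ κ₁ * φ s := mul_le_mul (hk1 t s) (hGb s) (norm_nonneg _) hκ₁0
    · rw [Set.indicator_of_notMem hs, norm_zero]
      exact mul_nonneg hκ₁0 (hφ0 s)
  have int4 : Integrable ((Set.Ici t).indicator g4) := by
    refine Integrable.mono' (hφint.const_mul κ₂)
      ((hg4c.stronglyMeasurable.indicator measurableSet_Ici).aestronglyMeasurable)
      (Filter.Eventually.of_forall fun s => ?_)
    by_cases hs : s ∈ Set.Ici t
    · rw [Set.indicator_of_mem hs]
      calc ‖g4 s‖ ≤ ‖(U t).comp (P₄.comp (Uinv s))‖ * ‖G s‖ :=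
            ContinuousLinearMap.le_opNorm _ _
        _ ≤ κ₂ * φ s := mul_le_mul (hk2 t s) (hGb s) (norm_nonneg _) hκ₂0
    · rw [Set.indicator_of_notMem hs, norm_zero]
      exact mul_nonneg hκ₂0 (hφ0 s)
  have hg2b : ∀ s : ℝ, (0 ≤ s ∧ s ≤ t) ∨ (t ≤ s ∧ s ≤ 0) → ‖g2 s‖ ≤ Bm * φ s := by
    intro s hs
    calc ‖g2 s‖ ≤ ‖(U t).comp (P₂₃.comp (Uinv s))‖ * ‖G s‖ :=
          ContinuousLinearMap.le_opNorm _ _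
      _ ≤ Bm * φ s := mul_le_mul (hmid t s hs) (hGb s) (norm_nonneg _) hBm0
  have intm : Integrable m := by
    refine Integrable.mono' (hφint.const_mul Bm) ?_
      (Filter.Eventually.of_forall fun s => ?_)
    · refine (StronglyMeasurable.ite (measurableSet_Icc (a := (0:ℝ)) (b := t))
        hg2c.stronglyMeasurable
        (StronglyMeasurable.ite (measurableSet_Icc (a := t) (b := (0:ℝ)))
          hg2c.neg.stronglyMeasurable stronglyMeasurable_const)).aestronglyMeasurable
    · simp only [hm]
      by_cases h1 : 0 ≤ s ∧ s ≤ t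
      · rw [if_pos h1]; exact hg2b s (Or.inl h1)
      · rw [if_neg h1]
        by_cases h2 : t ≤ s ∧ s ≤ 0
        · rw [if_pos h2, norm_neg]; exact hg2b s (Or.inr h2)
        · rw [if_neg h2, norm_zero]; exact mul_nonneg hBm0 (hφ0 s)
  have intm_eq : ∫ s, m s = ∫ s in (0:ℝ)..t, g2 s := by
    rcases lt_or_ge t 0 with ht | ht
    · have hmeq : m = (Set.Icc t 0).indicator fun s => -g2 s := by
        funext s
        simp only [hm, Set.indicator_apply, Set.mem_Icc]
        by_cases h2 : t ≤ s ∧ s ≤ 0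
        · rw [if_neg (fun h1 : 0 ≤ s ∧ s ≤ t =>
            absurd (le_trans h1.1 h1.2) (not_le.mpr ht)), if_pos h2]
        · rw [if_neg (fun h1 : 0 ≤ s ∧ s ≤ t =>
            absurd (le_trans h1.1 h1.2) (not_le.mpr ht)), if_neg h2]
      rw [hmeq, integral_indicator measurableSet_Icc, integral_Icc_eq_integral_Ioc,
        integral_neg, ← intervalIntegral.integral_of_le (le_of_lt ht),
        ← intervalIntegral.integral_symm]
    · have hmeq : m = (Set.Icc 0 t).indicator g2 := by
        funext s
        simp only [hm, Set.indicator_apply, Set.mem_Icc]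
        by_cases h1 : 0 ≤ s ∧ s ≤ t
        · rw [if_pos h1, if_pos h1]
        · rw [if_neg h1]
          by_cases h2 : t ≤ s ∧ s ≤ 0
          · exact absurd ⟨le_trans ht h2.1, le_trans h2.2 ht⟩ h1
          · rw [if_neg h2, if_neg h1]
      rw [hmeq, integral_indicator measurableSet_Icc, integral_Icc_eq_integral_Ioc,
        ← intervalIntegral.integral_of_le ht]
  calc ∫ s, greenGt U Uinv P₁ P₂₃ P₄ t s (G s)
      = ∫ s, ((Set.Iic t).indicator g1 s + m s - (Set.Ici t).indicator g4 s) := by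
        simp only [key]
    _ = (∫ s, ((Set.Iic t).indicator g1 s + m s)) - ∫ s, (Set.Ici t).indicator g4 s :=
        integral_sub (int1.add intm) int4
    _ = (∫ s, (Set.Iic t).indicator g1 s) + (∫ s, m s) - ∫ s, (Set.Ici t).indicator g4 s := by
        rw [integral_add int1 intm]
    _ = (∫ s in Set.Iic t, g1 s) + (∫ s in (0:ℝ)..t, g2 s) - ∫ s in Set.Ici t, g4 s := by
        rw [integral_indicator measurableSet_Iic, integral_indicator measurableSet_Ici, intm_eq]
lemma green_contAt (U Uinv : ℝ → Op n) (P₁ P₂₃ P₄ : Op n) (hU : Continuous U)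
    (hV : Continuous Uinv) (t₀ s : ℝ) (hs : s ≠ t₀) :
    ContinuousAt (fun t => greenGt U Uinv P₁ P₂₃ P₄ t s) t₀ := by
  have hc : ∀ M : Op n, Continuous fun t : ℝ => (U t).comp (M.comp (Uinv s)) := fun M =>
    (continuous_sandwich U Uinv hU hV M).comp (continuous_id.prodMk continuous_const)
  rcases lt_or_gt_of_ne hs with h | h
  · have hev : (fun t => greenGt U Uinv P₁ P₂₃ P₄ t s) =ᶠ[nhds t₀] fun t =>
        (U t).comp (P₁.comp (Uinv s))
        + (if 0 ≤ s then (U t).comp (P₂₃.comp (Uinv s)) else 0) := by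
      filter_upwards [eventually_gt_nhds h] with t ht
      unfold greenGt
      rw [if_pos (le_of_lt ht), if_neg (fun hc' : t ≤ s ∧ s ≤ 0 =>
        absurd hc'.1 (not_le.mpr ht)), if_neg (not_le.mpr ht), sub_zero]
      by_cases h0 : 0 ≤ s
      · rw [if_pos ⟨h0, le_of_lt ht⟩, if_pos h0]
      · rw [if_neg (fun hc' : 0 ≤ s ∧ s ≤ t => h0 hc'.1), if_neg h0]
    refine ContinuousAt.congr ?_ hev.symm
    refine ((hc P₁).add ?_).continuousAt
    by_cases h0 : 0 ≤ s
    · simpa [h0] using hc P₂₃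
    · simp [h0]
      exact continuous_const
  · have hev : (fun t => greenGt U Uinv P₁ P₂₃ P₄ t s) =ᶠ[nhds t₀] fun t =>
        (if s ≤ 0 then -((U t).comp (P₂₃.comp (Uinv s))) else 0)
        - (U t).comp (P₄.comp (Uinv s)) := by
      filter_upwards [eventually_lt_nhds h] with t ht
      unfold greenGt
      rw [if_neg (not_le.mpr ht), if_neg (fun hc' : 0 ≤ s ∧ s ≤ t =>
        absurd hc'.2 (not_le.mpr ht)), if_pos (le_of_lt ht), zero_add]
      by_cases h0 : s ≤ 0
      · rw [if_pos ⟨le_of_lt ht, h0⟩, if_pos h0]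
      · rw [if_neg (fun hc' : t ≤ s ∧ s ≤ 0 => h0 hc'.2), if_neg h0]
    refine ContinuousAt.congr ?_ hev.symm
    refine (Continuous.sub ?_ (hc P₄)).continuousAt
    by_cases h0 : s ≤ 0
    · simp only [h0, ↓reduceIte]; exact (hc P₂₃).neg
    · simp [h0]
      exact continuous_const
end FPR


set_option maxHeartbeats 1000000 in
/-- **(Existence and uniqueness of the fixed point `ϱ`, formula (3.46).)**
Under the decomposed exponential trichotomy with bounds `κ₁, κ₂` and with `f`
dominated by the integrable function `φ` and `ψ(t)`-Lipschitz, where `∫φ < c₁`,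
`∫ψ < c₂` and `(β + 2κ₁ + κ₂)c₂ < 1`, there is a unique continuous map `ϱ` with
`‖ϱ‖ ≤ (β + 2κ₁ + κ₂)c₁` satisfying, for all `t, η` (with `Y(s) = U(s)U(t)⁻¹η`),
`ϱ(t,η) = ∫_{−∞}^t U(t)P₁U(s)⁻¹F(s)ds + ∫_0^t U(t)(P₂+P₃)U(s)⁻¹F(s)ds
          − ∫_t^∞ U(t)P₄U(s)⁻¹F(s)ds`, where `F(s) = f(s, Y(s) + ϱ(s, Y(s)))`. -/
theorem fixed_point_rho_exists_unique {n : ℕ} (A U Uinv : ℝ → Op n)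
    (P Q : Op n) (Ps : Fin 4 → Op n) (β α κ₁ κ₂ c₁ c₂ : ℝ) (φ ψ : ℝ → ℝ)
    (f : ℝ → Euc n → Euc n)
    (hA : Continuous A) (hfund : IsFundamental A U Uinv)
    (htri : ExpTrichotomy U Uinv P Q β α)
    (hidem : ∀ i, (Ps i).comp (Ps i) = Ps i)
    (horth : ∀ i j, i ≠ j → (Ps i).comp (Ps j) = 0)
    (hPsum : P = Ps 0 + Ps 1 + Ps 2) (hQsum : Q = Ps 1 + Ps 2 + Ps 3)
    (hκ₁ : ∀ t s : ℝ, ‖(U t).comp ((Ps 0).comp (Uinv s))‖ ≤ κ₁)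
    (hκ₂ : ∀ t s : ℝ, ‖(U t).comp ((Ps 3).comp (Uinv s))‖ ≤ κ₂)
    (hfc : Continuous fun pr : ℝ × Euc n => f pr.1 pr.2)
    (hφ0 : ∀ t, 0 ≤ φ t) (hψ0 : ∀ t, 0 ≤ ψ t)
    (hφint : Integrable φ) (hψint : Integrable ψ)
    (hφc : (∫ t, φ t) < c₁) (hψc : (∫ t, ψ t) < c₂)
    (hfb : ∀ t x, ‖f t x‖ ≤ φ t)
    (hflip : ∀ t x₁ x₂, ‖f t x₁ - f t x₂‖ ≤ ψ t * ‖x₁ - x₂‖)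
    (hsmall : (β + 2 * κ₁ + κ₂) * c₂ < 1) :
    ∃ ϱ : ℝ → Euc n → Euc n,
      ((Continuous fun pr : ℝ × Euc n => ϱ pr.1 pr.2) ∧
        (∀ t η, ‖ϱ t η‖ ≤ (β + 2 * κ₁ + κ₂) * c₁) ∧
        (∀ t (η : Euc n), ϱ t η =
          (∫ s in Set.Iic t, ((U t).comp ((Ps 0).comp (Uinv s)))
              (f s (U s (Uinv t η) + ϱ s (U s (Uinv t η)))))
          + (∫ s in (0:ℝ)..t, ((U t).comp (((Ps 1) + (Ps 2)).comp (Uinv s)))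
              (f s (U s (Uinv t η) + ϱ s (U s (Uinv t η)))))
          - (∫ s in Set.Ici t, ((U t).comp ((Ps 3).comp (Uinv s)))
              (f s (U s (Uinv t η) + ϱ s (U s (Uinv t η))))))) ∧
      ∀ ϱ' : ℝ → Euc n → Euc n,
        ((Continuous fun pr : ℝ × Euc n => ϱ' pr.1 pr.2) ∧
          (∀ t η, ‖ϱ' t η‖ ≤ (β + 2 * κ₁ + κ₂) * c₁) ∧
          (∀ t (η : Euc n), ϱ' t η =
            (∫ s in Set.Iic t, ((U t).comp ((Ps 0).comp (Uinv s)))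
                (f s (U s (Uinv t η) + ϱ' s (U s (Uinv t η)))))
            + (∫ s in (0:ℝ)..t, ((U t).comp (((Ps 1) + (Ps 2)).comp (Uinv s)))
                (f s (U s (Uinv t η) + ϱ' s (U s (Uinv t η)))))
            - (∫ s in Set.Ici t, ((U t).comp ((Ps 3).comp (Uinv s)))
                (f s (U s (Uinv t η) + ϱ' s (U s (Uinv t η))))))) → ϱ' = ϱ := by
  classical
  obtain ⟨hUdiff, hUV, hVU⟩ := hfund
  obtain ⟨-, -, -, -, hβ1, hα0, hPest, -, hQest, -⟩ := htri
  have hU : Continuous U := continuous_iff_continuousAt.mpr fun t => (hUdiff t).continuousAt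
  have hV : Continuous Uinv := FPR.continuous_Uinv U Uinv hU hUV hVU
  have hβ0 : 0 ≤ β := le_trans zero_le_one hβ1
  have hκ₁0 : 0 ≤ κ₁ := le_trans (norm_nonneg _) (hκ₁ 0 0)
  have hκ₂0 : 0 ≤ κ₂ := le_trans (norm_nonneg _) (hκ₂ 0 0)
  have hφnn : 0 ≤ ∫ t, φ t := integral_nonneg hφ0
  have hψnn : 0 ≤ ∫ t, ψ t := integral_nonneg hψ0
  -- bounds for P and Q sandwiches
  have hPb : ∀ s t : ℝ, 0 ≤ s → s ≤ t → ‖(U t).comp (P.comp (Uinv s))‖ ≤ β := by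
    intro s t h0 hst
    refine (hPest s t h0 hst).trans ?_
    have he : Real.exp (-α * (t - s)) ≤ 1 := Real.exp_le_one_iff.mpr (by nlinarith)
    nlinarith
  have hQb : ∀ s t : ℝ, t ≤ s → s ≤ 0 → ‖(U t).comp (Q.comp (Uinv s))‖ ≤ β := by
    intro s t hts h0
    refine (hQest s t hts h0).trans ?_
    have he : Real.exp (-α * (s - t)) ≤ 1 := Real.exp_le_one_iff.mpr (by nlinarith)
    nlinarith
  have hsub : ∀ (Xo Yo : Op n) (t s : ℝ), (U t).comp ((Xo - Yo).comp (Uinv s))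
      = (U t).comp (Xo.comp (Uinv s)) - (U t).comp (Yo.comp (Uinv s)) := by
    intro Xo Yo t s
    rw [ContinuousLinearMap.sub_comp, ContinuousLinearMap.comp_sub]
  have hmid : ∀ t s : ℝ, (0 ≤ s ∧ s ≤ t) ∨ (t ≤ s ∧ s ≤ 0) →
      ‖(U t).comp ((Ps 1 + Ps 2).comp (Uinv s))‖ ≤ β + κ₁ + κ₂ := by
    intro t s hreg
    rcases hreg with h | h
    · have hPd : Ps 1 + Ps 2 = P - Ps 0 := by rw [hPsum]; abel
      rw [hPd, hsub]
      calc ‖(U t).comp (P.comp (Uinv s)) - (U t).comp ((Ps 0).comp (Uinv s))‖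
          ≤ ‖(U t).comp (P.comp (Uinv s))‖ + ‖(U t).comp ((Ps 0).comp (Uinv s))‖ :=
            norm_sub_le _ _
        _ ≤ β + κ₁ := add_le_add (hPb s t h.1 h.2) (hκ₁ t s)
        _ ≤ β + κ₁ + κ₂ := by linarith
    · have hQd : Ps 1 + Ps 2 = Q - Ps 3 := by rw [hQsum]; abel
      rw [hQd, hsub]
      calc ‖(U t).comp (Q.comp (Uinv s)) - (U t).comp ((Ps 3).comp (Uinv s))‖
          ≤ ‖(U t).comp (Q.comp (Uinv s))‖ + ‖(U t).comp ((Ps 3).comp (Uinv s))‖ :=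
            norm_sub_le _ _
        _ ≤ β + κ₂ := add_le_add (hQb s t h.1 h.2) (hκ₂ t s)
        _ ≤ β + κ₁ + κ₂ := by linarith
  have hGb : ∀ t s : ℝ, ‖greenGt U Uinv (Ps 0) (Ps 1 + Ps 2) (Ps 3) t s‖ ≤ β + κ₁ + κ₂ :=
    FPR.green_bound U Uinv P Q (Ps 0) (Ps 1 + Ps 2) (Ps 3) β κ₁ κ₂ hβ0 hκ₁0 hκ₂0 hPb hQb
      (by rw [hPsum, add_assoc]) hQsum hκ₁ hκ₂
  -- the space of bounded continuous functions
  -- trajectory continuity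
  have hYc : Continuous fun q : (ℝ × Euc n) × ℝ => U q.2 ((Uinv q.1.1) q.1.2) :=
    (hU.comp continuous_snd).clm_apply
      ((hV.comp (continuous_fst.comp continuous_fst)).clm_apply
        (continuous_snd.comp continuous_fst))
  have hFc : ∀ ϱ : BoundedContinuousFunction (ℝ × Euc n) (Euc n),
      Continuous fun q : (ℝ × Euc n) × ℝ =>
      f q.2 (U q.2 ((Uinv q.1.1) q.1.2) + ϱ (q.2, U q.2 ((Uinv q.1.1) q.1.2))) := by
    intro ϱ
    exact hfc.comp (continuous_snd.prodMk
      (hYc.add (ϱ.continuous.comp (continuous_snd.prodMk hYc))))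
  have hGcont : ∀ (ϱ : BoundedContinuousFunction (ℝ × Euc n) (Euc n)) (p : ℝ × Euc n),
      Continuous fun s : ℝ =>
      f s (U s ((Uinv p.1) p.2) + ϱ (s, U s ((Uinv p.1) p.2))) := fun ϱ p =>
    (hFc ϱ).comp (continuous_const.prodMk continuous_id)
  have hInt : ∀ (ϱ : BoundedContinuousFunction (ℝ × Euc n) (Euc n)) (p : ℝ × Euc n),
      Integrable fun s => greenGt U Uinv (Ps 0) (Ps 1 + Ps 2) (Ps 3) p.1 s
        (f s (U s ((Uinv p.1) p.2) + ϱ (s, U s ((Uinv p.1) p.2)))) := fun ϱ p =>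
    FPR.green_apply_integrable U Uinv (Ps 0) (Ps 1 + Ps 2) (Ps 3) hU hV φ hφint
      (β + κ₁ + κ₂) p.1 (hGb p.1) _ (hGcont ϱ p) (fun s => hfb s _)
  -- continuity of the transformed function
  have hTcont : ∀ ϱ : BoundedContinuousFunction (ℝ × Euc n) (Euc n),
      Continuous fun p : ℝ × Euc n => ∫ s,
        greenGt U Uinv (Ps 0) (Ps 1 + Ps 2) (Ps 3) p.1 s
          (f s (U s ((Uinv p.1) p.2) + ϱ (s, U s ((Uinv p.1) p.2)))) := by
    intro ϱ
    refine continuous_iff_continuousAt.mpr fun p₀ => ?_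
    have hae : ∀ᵐ s : ℝ, s ≠ p₀.1 := by
      have hset : {s : ℝ | ¬ s ≠ p₀.1} = {p₀.1} := by ext x; simp
      rw [MeasureTheory.ae_iff, hset]
      exact Real.volume_singleton
    refine MeasureTheory.tendsto_integral_filter_of_dominated_convergence
      (fun s => (β + κ₁ + κ₂) * φ s) ?_ ?_ ?_ ?_
    · exact Filter.Eventually.of_forall fun p =>
        (FPR.green_apply_meas U Uinv (Ps 0) (Ps 1 + Ps 2) (Ps 3) hU hV p.1 _
          (hGcont ϱ p)).aestronglyMeasurable
    · refine Filter.Eventually.of_forall fun p => Filter.Eventually.of_forall fun s => ?_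
      calc ‖greenGt U Uinv (Ps 0) (Ps 1 + Ps 2) (Ps 3) p.1 s
            (f s (U s ((Uinv p.1) p.2) + ϱ (s, U s ((Uinv p.1) p.2))))‖
          ≤ ‖greenGt U Uinv (Ps 0) (Ps 1 + Ps 2) (Ps 3) p.1 s‖ * ‖f s (U s ((Uinv p.1) p.2)
            + ϱ (s, U s ((Uinv p.1) p.2)))‖ := ContinuousLinearMap.le_opNorm _ _
        _ ≤ (β + κ₁ + κ₂) * φ s :=
            mul_le_mul (hGb p.1 s) (hfb s _) (norm_nonneg _) (by linarith)
    · exact hφint.const_mul _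
    · filter_upwards [hae] with s hs
      have h1 : ContinuousAt (fun p : ℝ × Euc n =>
          greenGt U Uinv (Ps 0) (Ps 1 + Ps 2) (Ps 3) p.1 s) p₀ :=
        (FPR.green_contAt U Uinv (Ps 0) (Ps 1 + Ps 2) (Ps 3) hU hV p₀.1 s hs).comp
          continuousAt_fst
      have h2 : ContinuousAt (fun p : ℝ × Euc n =>
          f s (U s ((Uinv p.1) p.2) + ϱ (s, U s ((Uinv p.1) p.2)))) p₀ :=
        ((hFc ϱ).comp (continuous_id.prodMk continuous_const)).continuousAt
      exact (isBoundedBilinearMap_apply.continuous.continuousAt.comp (h1.prodMk h2))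
  have hTbound : ∀ (ϱ : BoundedContinuousFunction (ℝ × Euc n) (Euc n)) (p : ℝ × Euc n),
      ‖∫ s, greenGt U Uinv (Ps 0) (Ps 1 + Ps 2) (Ps 3) p.1 s
        (f s (U s ((Uinv p.1) p.2) + ϱ (s, U s ((Uinv p.1) p.2))))‖
      ≤ (β + κ₁ + κ₂) * ∫ t, φ t := by
    intro ϱ p
    rw [← MeasureTheory.integral_const_mul]
    refine MeasureTheory.norm_integral_le_of_norm_le (hφint.const_mul _)
      (Filter.Eventually.of_forall fun s => ?_)
    calc ‖greenGt U Uinv (Ps 0) (Ps 1 + Ps 2) (Ps 3) p.1 s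
          (f s (U s ((Uinv p.1) p.2) + ϱ (s, U s ((Uinv p.1) p.2))))‖
        ≤ ‖greenGt U Uinv (Ps 0) (Ps 1 + Ps 2) (Ps 3) p.1 s‖ * ‖f s (U s ((Uinv p.1) p.2)
          + ϱ (s, U s ((Uinv p.1) p.2)))‖ := ContinuousLinearMap.le_opNorm _ _
      _ ≤ (β + κ₁ + κ₂) * φ s :=
          mul_le_mul (hGb p.1 s) (hfb s _) (norm_nonneg _) (by linarith)
  let Tfun : BoundedContinuousFunction (ℝ × Euc n) (Euc n) →
      BoundedContinuousFunction (ℝ × Euc n) (Euc n) := fun ϱ =>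
    BoundedContinuousFunction.ofNormedAddCommGroup
      (fun p : ℝ × Euc n => ∫ s, greenGt U Uinv (Ps 0) (Ps 1 + Ps 2) (Ps 3) p.1 s
        (f s (U s ((Uinv p.1) p.2) + ϱ (s, U s ((Uinv p.1) p.2)))))
      (hTcont ϱ) ((β + κ₁ + κ₂) * ∫ t, φ t) (hTbound ϱ)
  have hTapp : ∀ (ϱ : BoundedContinuousFunction (ℝ × Euc n) (Euc n)) (p : ℝ × Euc n),
      Tfun ϱ p = ∫ s, greenGt U Uinv (Ps 0) (Ps 1 + Ps 2) (Ps 3) p.1 s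
        (f s (U s ((Uinv p.1) p.2) + ϱ (s, U s ((Uinv p.1) p.2)))) := fun ϱ p => rfl
  -- contraction estimate
  have hdistb : ∀ (ϱ₁ ϱ₂ : BoundedContinuousFunction (ℝ × Euc n) (Euc n)) (p : ℝ × Euc n),
      dist (Tfun ϱ₁ p) (Tfun ϱ₂ p) ≤ ((β + κ₁ + κ₂) * ∫ t, ψ t) * dist ϱ₁ ϱ₂ := by
    intro ϱ₁ ϱ₂ p
    rw [dist_eq_norm, hTapp, hTapp, ← MeasureTheory.integral_sub (hInt ϱ₁ p) (hInt ϱ₂ p)]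
    have hre : ((β + κ₁ + κ₂) * ∫ t, ψ t) * dist ϱ₁ ϱ₂
        = ∫ s, ((β + κ₁ + κ₂) * dist ϱ₁ ϱ₂) * ψ s := by
      rw [MeasureTheory.integral_const_mul]; ring
    rw [hre]
    refine MeasureTheory.norm_integral_le_of_norm_le
      (hψint.const_mul _) (Filter.Eventually.of_forall fun s => ?_)
    have hms : greenGt U Uinv (Ps 0) (Ps 1 + Ps 2) (Ps 3) p.1 s
          (f s (U s ((Uinv p.1) p.2) + ϱ₁ (s, U s ((Uinv p.1) p.2))))
        - greenGt U Uinv (Ps 0) (Ps 1 + Ps 2) (Ps 3) p.1 s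
          (f s (U s ((Uinv p.1) p.2) + ϱ₂ (s, U s ((Uinv p.1) p.2))))
        = greenGt U Uinv (Ps 0) (Ps 1 + Ps 2) (Ps 3) p.1 s
          (f s (U s ((Uinv p.1) p.2) + ϱ₁ (s, U s ((Uinv p.1) p.2)))
           - f s (U s ((Uinv p.1) p.2) + ϱ₂ (s, U s ((Uinv p.1) p.2)))) :=
      (map_sub _ _ _).symm
    rw [hms]
    calc ‖greenGt U Uinv (Ps 0) (Ps 1 + Ps 2) (Ps 3) p.1 s
          (f s (U s ((Uinv p.1) p.2) + ϱ₁ (s, U s ((Uinv p.1) p.2)))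
           - f s (U s ((Uinv p.1) p.2) + ϱ₂ (s, U s ((Uinv p.1) p.2))))‖
        ≤ ‖greenGt U Uinv (Ps 0) (Ps 1 + Ps 2) (Ps 3) p.1 s‖
          * ‖f s (U s ((Uinv p.1) p.2) + ϱ₁ (s, U s ((Uinv p.1) p.2)))
            - f s (U s ((Uinv p.1) p.2) + ϱ₂ (s, U s ((Uinv p.1) p.2)))‖ :=
          ContinuousLinearMap.le_opNorm _ _
      _ ≤ (β + κ₁ + κ₂) * (ψ s * ‖ϱ₁ (s, U s ((Uinv p.1) p.2))
            - ϱ₂ (s, U s ((Uinv p.1) p.2))‖) := by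
          refine mul_le_mul (hGb p.1 s) ?_ (norm_nonneg _) (by linarith)
          have := hflip s (U s ((Uinv p.1) p.2) + ϱ₁ (s, U s ((Uinv p.1) p.2)))
            (U s ((Uinv p.1) p.2) + ϱ₂ (s, U s ((Uinv p.1) p.2)))
          rwa [add_sub_add_left_eq_sub] at this
      _ ≤ (β + κ₁ + κ₂) * (ψ s * dist ϱ₁ ϱ₂) := by
          refine mul_le_mul_of_nonneg_left ?_ (by linarith)
          refine mul_le_mul_of_nonneg_left ?_ (hψ0 s)
          rw [← dist_eq_norm]
          exact BoundedContinuousFunction.dist_coe_le_dist _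
      _ = ((β + κ₁ + κ₂) * dist ϱ₁ ϱ₂) * ψ s := by ring
  have hr0 : 0 ≤ (β + κ₁ + κ₂) * ∫ t, ψ t := mul_nonneg (by linarith) hψnn
  have hrlt : (β + κ₁ + κ₂) * ∫ t, ψ t < 1 := by
    calc (β + κ₁ + κ₂) * ∫ t, ψ t ≤ (β + 2 * κ₁ + κ₂) * ∫ t, ψ t :=
          mul_le_mul_of_nonneg_right (by linarith) hψnn
      _ ≤ (β + 2 * κ₁ + κ₂) * c₂ :=
          mul_le_mul_of_nonneg_left (le_of_lt hψc) (by linarith)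
      _ < 1 := hsmall
  have hco : ((Real.toNNReal ((β + κ₁ + κ₂) * ∫ t, ψ t)) : ℝ)
      = (β + κ₁ + κ₂) * ∫ t, ψ t := Real.coe_toNNReal _ hr0
  have hlip : LipschitzWith (Real.toNNReal ((β + κ₁ + κ₂) * ∫ t, ψ t)) Tfun := by
    refine LipschitzWith.of_dist_le_mul fun ϱ₁ ϱ₂ => ?_
    rw [hco, BoundedContinuousFunction.dist_le (mul_nonneg hr0 dist_nonneg)]
    exact fun p => hdistb ϱ₁ ϱ₂ p
  have hcontr : ContractingWith (Real.toNNReal ((β + κ₁ + κ₂) * ∫ t, ψ t)) Tfun := by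
    constructor
    · have h1 : ((Real.toNNReal ((β + κ₁ + κ₂) * ∫ t, ψ t)) : ℝ) < 1 := by
        rw [hco]; exact hrlt
      exact_mod_cast h1
    · exact hlip
  set ϱ₀ : BoundedContinuousFunction (ℝ × Euc n) (Euc n) :=
    ContractingWith.fixedPoint Tfun hcontr with hϱ₀
  have hfix : Tfun ϱ₀ = ϱ₀ := hcontr.fixedPoint_isFixedPt
  -- splitting of the integral
  have hsplit : ∀ (ϱ : BoundedContinuousFunction (ℝ × Euc n) (Euc n)) (t : ℝ) (η : Euc n),
      (∫ s, greenGt U Uinv (Ps 0) (Ps 1 + Ps 2) (Ps 3) t s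
        (f s (U s ((Uinv t) η) + ϱ (s, U s ((Uinv t) η)))))
      = (∫ s in Set.Iic t, ((U t).comp ((Ps 0).comp (Uinv s)))
            (f s (U s (Uinv t η) + ϱ (s, U s (Uinv t η)))))
        + (∫ s in (0:ℝ)..t, ((U t).comp (((Ps 1) + (Ps 2)).comp (Uinv s)))
            (f s (U s (Uinv t η) + ϱ (s, U s (Uinv t η)))))
        - (∫ s in Set.Ici t, ((U t).comp ((Ps 3).comp (Uinv s)))
            (f s (U s (Uinv t η) + ϱ (s, U s (Uinv t η))))) := fun ϱ t η =>
    FPR.green_integral_split U Uinv (Ps 0) (Ps 1 + Ps 2) (Ps 3) hU hV φ hφ0 hφint κ₁ κ₂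
      (β + κ₁ + κ₂) (by linarith) hκ₁ hκ₂ hmid t _ (hGcont ϱ (t, η)) (fun s => hfb s _)
  refine ⟨fun t η => ϱ₀ (t, η), ⟨?_, ?_, ?_⟩, ?_⟩
  · exact ϱ₀.continuous
  · intro t η
    have hb : ‖ϱ₀ (t, η)‖ ≤ (β + κ₁ + κ₂) * ∫ t, φ t := by
      conv_lhs => rw [← hfix]
      exact hTbound ϱ₀ (t, η)
    refine le_trans hb ?_
    exact mul_le_mul (by linarith) (le_of_lt hφc) hφnn (by linarith)
  · intro t η
    calc ϱ₀ (t, η) = Tfun ϱ₀ (t, η) := by rw [hfix]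
      _ = _ := hsplit ϱ₀ t η
  · rintro ϱ' ⟨hc', hb', heq'⟩
    let ϱ'b : BoundedContinuousFunction (ℝ × Euc n) (Euc n) :=
      BoundedContinuousFunction.ofNormedAddCommGroup (fun p => ϱ' p.1 p.2) hc'
        ((β + 2 * κ₁ + κ₂) * c₁) (fun p => hb' p.1 p.2)
    have hfix' : Function.IsFixedPt Tfun ϱ'b := by
      apply BoundedContinuousFunction.ext
      intro p
      calc Tfun ϱ'b p = ∫ s, greenGt U Uinv (Ps 0) (Ps 1 + Ps 2) (Ps 3) p.1 s
            (f s (U s ((Uinv p.1) p.2) + ϱ'b (s, U s ((Uinv p.1) p.2)))) := rfl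
        _ = _ := hsplit ϱ'b p.1 p.2
        _ = ϱ' p.1 p.2 := (heq' p.1 p.2).symm
        _ = ϱ'b p := rfl
    have huniq : ϱ'b = ϱ₀ := hcontr.fixedPoint_unique hfix'
    funext t η
    calc ϱ' t η = ϱ'b (t, η) := rfl
      _ = ϱ₀ (t, η) := by rw [huniq]
end
end
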